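/- arXiv:2404.05859 — 9 statements merged into one kernel-verified Lean document; each statement's English description precedes it below -/
import Mathlib

section
/- Let n ≥ 1, let N ⊂ ℝⁿ be a finite set, α ∈ [0,1], and let V, V^k, V^l be boxes in ℝⁿ with V ⊆ V^k, V ⊆ V^l and V = V^k ∩ V^l. Then the cost of the box-union satisfies the submodularity-type inequality C_α(V^k ∪ V^l, N) − C_α(V, N) ≤ (C_α(V^k, N) − C_α(V, N)) + (C_α(V^l, N) − C_α(V, N)). -/
open scoped Classical

noncomputable section

namespace BoxFiltration

variable {n : ℕ}

/-- `(l, u)` determines a box `∏ i, [l i, u i]` when `l i ≤ u i` for all `i`. -/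
def IsBox (l u : Fin n → ℝ) : Prop := ∀ i, l i ≤ u i

/-- The set of points of the box `∏ i, [l i, u i]`. -/
def boxSet (l u : Fin n → ℝ) : Set (Fin n → ℝ) := {x | ∀ i, l i ≤ x i ∧ x i ≤ u i}

/-- Total width `|V| = ∑ i, (u i - l i)`. -/
def width (l u : Fin n → ℝ) : ℝ := ∑ i, (u i - l i)

/-- Box containment: the box `(l, u)` is contained in the box `(L, U)`. -/
def BoxLE (l u L U : Fin n → ℝ) : Prop := ∀ i, L i ≤ l i ∧ u i ≤ U i

/-- Open π-neighborhood `B(V, π) = ∏ i, (l i - π, u i + π)`. -/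
def nbhd (l u : Fin n → ℝ) (π : ℝ) : Set (Fin n → ℝ) :=
  {x | ∀ i, l i - π < x i ∧ x i < u i + π}

/-- Weight of a point `x` w.r.t. the box `(l, u)`:
`w_V(x) = min {0, min_i (x i - l i), min_i (u i - x i)}`. -/
def weight (l u x : Fin n → ℝ) : ℝ :=
  min 0 (sInf (Set.range fun i => min (x i - l i) (u i - x i)))

/-- Point-cover cost `C_α(V, N) = -α ∑_{x ∈ N} w_V(x) + (1 - α)|V|`. -/
def cost (α : ℝ) (l u : Fin n → ℝ) (N : Finset (Fin n → ℝ)) : ℝ :=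
  -α * ∑ x ∈ N, weight l u x + (1 - α) * width l u

/-- Neighborhood point set `N = X ∩ B(V, π)`. -/
def nbhdPts (X : Finset (Fin n → ℝ)) (l u : Fin n → ℝ) (π : ℝ) : Finset (Fin n → ℝ) :=
  X.filter (fun x => x ∈ nbhd l u π)

/-- `(l', u') ∈ sol_α(V, N)`: `(l', u')` is a box containing `V = (l, u)` of minimal cost. -/
def OptSol (α : ℝ) (l u : Fin n → ℝ) (N : Finset (Fin n → ℝ)) (l' u' : Fin n → ℝ) : Prop :=
  IsBox l' u' ∧ BoxLE l u l' u' ∧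
    ∀ l'' u'', IsBox l'' u'' → BoxLE l u l'' u'' → cost α l' u' N ≤ cost α l'' u'' N

/-- A largest optimal solution contains every optimal solution. -/
def LargestOptSol (α : ℝ) (l u : Fin n → ℝ) (N : Finset (Fin n → ℝ)) (l' u' : Fin n → ℝ) :
    Prop :=
  OptSol α l u N l' u' ∧ ∀ l'' u'', OptSol α l u N l'' u'' → BoxLE l'' u'' l' u'

end BoxFiltration


open BoxFiltration

namespace BoxSubmodAux

open BoxFiltration

variable {n : ℕ}

lemma weight_le_sInf (l u x : Fin n → ℝ) :
    weight l u x ≤ sInf (Set.range fun i => min (x i - l i) (u i - x i)) :=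
  min_le_right _ _

lemma weight_nonpos (l u x : Fin n → ℝ) : weight l u x ≤ 0 := min_le_left _ _

lemma weight_le_union (hn : 1 ≤ n) (lk uk ll ul x : Fin n → ℝ) :
    weight lk uk x ≤
      weight (fun i => min (lk i) (ll i)) (fun i => max (uk i) (ul i)) x := by
  haveI : Nonempty (Fin n) := ⟨⟨0, hn⟩⟩
  refine le_min (weight_nonpos _ _ _) (le_csInf (Set.range_nonempty _) ?_)
  rintro b ⟨i, rfl⟩
  calc weight lk uk x ≤ sInf (Set.range fun i => min (x i - lk i) (uk i - x i)) :=
        weight_le_sInf _ _ _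
    _ ≤ min (x i - lk i) (uk i - x i) :=
        csInf_le (Set.Finite.bddBelow (Set.finite_range _)) ⟨i, rfl⟩
    _ ≤ min (x i - min (lk i) (ll i)) (max (uk i) (ul i) - x i) := by
        exact min_le_min (by linarith [min_le_left (lk i) (ll i)])
          (by linarith [le_max_left (uk i) (ul i)])

lemma min_weight_le_inter (hn : 1 ≤ n) (lk uk ll ul x : Fin n → ℝ) :
    min (weight lk uk x) (weight ll ul x) ≤
      weight (fun i => max (lk i) (ll i)) (fun i => min (uk i) (ul i)) x := by
  haveI : Nonempty (Fin n) := ⟨⟨0, hn⟩⟩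
  refine le_min (le_trans (min_le_left _ _) (weight_nonpos _ _ _))
    (le_csInf (Set.range_nonempty _) ?_)
  rintro b ⟨i, rfl⟩
  have hk : weight lk uk x ≤ min (x i - lk i) (uk i - x i) :=
    le_trans (weight_le_sInf _ _ _)
      (csInf_le (Set.Finite.bddBelow (Set.finite_range _)) ⟨i, rfl⟩)
  have hl : weight ll ul x ≤ min (x i - ll i) (ul i - x i) :=
    le_trans (weight_le_sInf _ _ _)
      (csInf_le (Set.Finite.bddBelow (Set.finite_range _)) ⟨i, rfl⟩)
  have h1 : min (weight lk uk x) (weight ll ul x) ≤ x i - max (lk i) (ll i) := by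
    rcases le_total (lk i) (ll i) with h | h
    · simpa [max_eq_right h] using le_trans (min_le_right _ _)
        (le_trans hl (min_le_left _ _))
    · simpa [max_eq_left h] using le_trans (min_le_left _ _)
        (le_trans hk (min_le_left _ _))
  have h2 : min (weight lk uk x) (weight ll ul x) ≤ min (uk i) (ul i) - x i := by
    rcases le_total (uk i) (ul i) with h | h
    · simpa [min_eq_left h] using le_trans (min_le_left _ _)
        (le_trans hk (min_le_right _ _))
    · simpa [min_eq_right h] using le_trans (min_le_right _ _)
        (le_trans hl (min_le_right _ _))
  exact le_min h1 h2

lemma weight_key (hn : 1 ≤ n) (lk uk ll ul x : Fin n → ℝ) :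
    weight lk uk x + weight ll ul x ≤
      weight (fun i => min (lk i) (ll i)) (fun i => max (uk i) (ul i)) x +
        weight (fun i => max (lk i) (ll i)) (fun i => min (uk i) (ul i)) x := by
  have h1 := weight_le_union hn lk uk ll ul x
  have h2 := weight_le_union hn ll ul lk uk x
  have h2' : weight ll ul x ≤
      weight (fun i => min (lk i) (ll i)) (fun i => max (uk i) (ul i)) x := by
    have e1 : (fun i => min (ll i) (lk i)) = fun i => min (lk i) (ll i) := by
      funext i; exact min_comm _ _
    have e2 : (fun i => max (ul i) (uk i)) = fun i => max (uk i) (ul i) := by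
      funext i; exact max_comm _ _
    rwa [e1, e2] at h2
  have h3 := min_weight_le_inter hn lk uk ll ul x
  rcases le_total (weight lk uk x) (weight ll ul x) with h | h
  · have := min_eq_left h ▸ h3
    linarith [this]
  · have := min_eq_right h ▸ h3
    linarith [this]

end BoxSubmodAux


/-- submodularity-type inequality for the cost of the box-union,
when `V = Vᵏ ∩ Vˡ` with `V ⊆ Vᵏ` and `V ⊆ Vˡ`. -/
theorem box_union_cost_submodular
    (n : ℕ) (hn : 1 ≤ n) (N : Finset (Fin n → ℝ)) (α : ℝ)
    (hα0 : 0 ≤ α) (hα1 : α ≤ 1)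
    (l u lk uk ll ul : Fin n → ℝ)
    (hV : IsBox l u) (hVk : IsBox lk uk) (hVl : IsBox ll ul)
    (hsubk : BoxLE l u lk uk) (hsubl : BoxLE l u ll ul)
    (hinterl : ∀ i, l i = max (lk i) (ll i)) (hinteru : ∀ i, u i = min (uk i) (ul i)) :
    cost α (fun i => min (lk i) (ll i)) (fun i => max (uk i) (ul i)) N - cost α l u N ≤
      (cost α lk uk N - cost α l u N) + (cost α ll ul N - cost α l u N) := by
  have hl' : l = fun i => max (lk i) (ll i) := funext hinterl
  have hu' : u = fun i => min (uk i) (ul i) := funext hinteru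
  subst hl' hu'
  have hw : ∑ x ∈ N, weight lk uk x + ∑ x ∈ N, weight ll ul x ≤
      ∑ x ∈ N, weight (fun i => min (lk i) (ll i)) (fun i => max (uk i) (ul i)) x +
        ∑ x ∈ N, weight (fun i => max (lk i) (ll i)) (fun i => min (uk i) (ul i)) x := by
    rw [← Finset.sum_add_distrib, ← Finset.sum_add_distrib]
    exact Finset.sum_le_sum fun x _ => BoxSubmodAux.weight_key hn lk uk ll ul x
  have hwidth : width (fun i => min (lk i) (ll i)) (fun i => max (uk i) (ul i)) +
      width (fun i => max (lk i) (ll i)) (fun i => min (uk i) (ul i)) =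
      width lk uk + width ll ul := by
    unfold width
    rw [← Finset.sum_add_distrib, ← Finset.sum_add_distrib]
    refine Finset.sum_congr rfl fun i _ => ?_
    rcases le_total (lk i) (ll i) with h | h <;>
      rcases le_total (uk i) (ul i) with h' | h' <;>
      simp [min_eq_left, min_eq_right, max_eq_left, max_eq_right, h, h'] <;> ring
  unfold cost
  nlinarith [mul_nonneg hα0 (sub_nonneg.2 hw)]
end
end

section
/- Let n ≥ 1, let X ⊂ ℝⁿ be a finite point cloud, V a box in ℝⁿ, π > 0, α ∈ [0,1], and N = X ∩ B(V, π). If V^l and V^k are both optimal solutions in sol_α(V, N), then their intersection V^l ∩ V^k is also an optimal solution in sol_α(V, N). -/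
open scoped Classical

noncomputable section

open BoxFiltration

/-- Superadditivity of the weight under intersection/union of boxes. -/
private lemma weight_ineq {n : ℕ} (hn : 1 ≤ n) (lk uk ll ul x : Fin n → ℝ) :
    weight lk uk x + weight ll ul x ≤
      weight (fun i => max (lk i) (ll i)) (fun i => min (uk i) (ul i)) x +
      weight (fun i => min (lk i) (ll i)) (fun i => max (uk i) (ul i)) x := by
  have hne : Nonempty (Fin n) := ⟨⟨0, hn⟩⟩
  set fK := fun i => min (x i - lk i) (uk i - x i) with hfK
  set fL := fun i => min (x i - ll i) (ul i - x i) with hfL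
  set A := sInf (Set.range fK) with hA
  set B := sInf (Set.range fL) with hB
  have hbddK : BddBelow (Set.range fK) := (Set.finite_range fK).bddBelow
  have hbddL : BddBelow (Set.range fL) := (Set.finite_range fL).bddBelow
  have hAle : ∀ i, A ≤ fK i := fun i => csInf_le hbddK ⟨i, rfl⟩
  have hBle : ∀ i, B ≤ fL i := fun i => csInf_le hbddL ⟨i, rfl⟩
  -- lower bound for the intersection infimum
  have hI : min A B ≤
      sInf (Set.range fun i => min (x i - max (lk i) (ll i)) (min (uk i) (ul i) - x i)) := by
    refine le_csInf (Set.range_nonempty _) ?_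
    rintro _ ⟨i, rfl⟩
    have hK1 : A ≤ x i - lk i := (hAle i).trans (min_le_left _ _)
    have hK2 : A ≤ uk i - x i := (hAle i).trans (min_le_right _ _)
    have hL1 : B ≤ x i - ll i := (hBle i).trans (min_le_left _ _)
    have hL2 : B ≤ ul i - x i := (hBle i).trans (min_le_right _ _)
    refine le_min ?_ ?_
    · rcases le_total (lk i) (ll i) with h | h
      · rw [max_eq_right h]; exact (min_le_right A B).trans hL1
      · rw [max_eq_left h]; exact (min_le_left A B).trans hK1
    · rcases le_total (uk i) (ul i) with h | h
      · rw [min_eq_left h]; exact (min_le_left A B).trans hK2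
      · rw [min_eq_right h]; exact (min_le_right A B).trans hL2
  -- lower bound for the union infimum
  have hU : max A B ≤
      sInf (Set.range fun i => min (x i - min (lk i) (ll i)) (max (uk i) (ul i) - x i)) := by
    refine le_csInf (Set.range_nonempty _) ?_
    rintro _ ⟨i, rfl⟩
    have hK1 : A ≤ x i - lk i := (hAle i).trans (min_le_left _ _)
    have hK2 : A ≤ uk i - x i := (hAle i).trans (min_le_right _ _)
    have hL1 : B ≤ x i - ll i := (hBle i).trans (min_le_left _ _)
    have hL2 : B ≤ ul i - x i := (hBle i).trans (min_le_right _ _)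
    have hmin1 : min (lk i) (ll i) ≤ lk i := min_le_left _ _
    have hmin2 : min (lk i) (ll i) ≤ ll i := min_le_right _ _
    have hmax1 : uk i ≤ max (uk i) (ul i) := le_max_left _ _
    have hmax2 : ul i ≤ max (uk i) (ul i) := le_max_right _ _
    refine max_le (le_min (by linarith) (by linarith)) (le_min (by linarith) (by linarith))
  have hwK : weight lk uk x = min 0 A := rfl
  have hwL : weight ll ul x = min 0 B := rfl
  have hwI : min 0 (min A B) ≤
      weight (fun i => max (lk i) (ll i)) (fun i => min (uk i) (ul i)) x :=
    min_le_min le_rfl hI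
  have hwU : min 0 (max A B) ≤
      weight (fun i => min (lk i) (ll i)) (fun i => max (uk i) (ul i)) x :=
    min_le_min le_rfl hU
  have hkey : min 0 (min A B) + min 0 (max A B) = min 0 A + min 0 B := by
    rcases le_total A B with h | h
    · rw [min_eq_left h, max_eq_right h]
    · rw [min_eq_right h, max_eq_left h]; ring
  rw [hwK, hwL]
  linarith

/-- Widths add exactly under intersection/union. -/
private lemma width_eq {n : ℕ} (lk uk ll ul : Fin n → ℝ) :
    width (fun i => max (lk i) (ll i)) (fun i => min (uk i) (ul i)) +
      width (fun i => min (lk i) (ll i)) (fun i => max (uk i) (ul i)) =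
    width lk uk + width ll ul := by
  unfold width
  rw [← Finset.sum_add_distrib, ← Finset.sum_add_distrib]
  refine Finset.sum_congr rfl fun i _ => ?_
  have h1 : min (uk i) (ul i) + max (uk i) (ul i) = uk i + ul i := min_add_max _ _
  have h2 : min (lk i) (ll i) + max (lk i) (ll i) = lk i + ll i := min_add_max _ _
  linarith

/-- the intersection of two optimal solutions in `sol_α(V, N)`,
with `N = X ∩ B(V, π)`, is again an optimal solution. -/
theorem inter_mem_optSol
    (n : ℕ) (hn : 1 ≤ n) (X : Finset (Fin n → ℝ)) (α π : ℝ)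
    (hπ : 0 < π) (hα0 : 0 ≤ α) (hα1 : α ≤ 1)
    (l u lk uk ll ul : Fin n → ℝ) (hV : IsBox l u)
    (hk : OptSol α l u (nbhdPts X l u π) lk uk)
    (hl : OptSol α l u (nbhdPts X l u π) ll ul) :
    OptSol α l u (nbhdPts X l u π)
      (fun i => max (lk i) (ll i)) (fun i => min (uk i) (ul i)) := by
  set N := nbhdPts X l u π with hN
  obtain ⟨hkbox, hkle, hkopt⟩ := hk
  obtain ⟨hlbox, hlle, hlopt⟩ := hl
  -- the intersection is a box containing V
  have hIbox : IsBox (fun i => max (lk i) (ll i)) (fun i => min (uk i) (ul i)) := by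
    intro i
    have := hV i
    have h1 := (hkle i).1; have h2 := (hkle i).2
    have h3 := (hlle i).1; have h4 := (hlle i).2
    exact max_le (le_min (by linarith) (by linarith)) (le_min (by linarith) (by linarith))
  have hIle : BoxLE l u (fun i => max (lk i) (ll i)) (fun i => min (uk i) (ul i)) := by
    intro i
    exact ⟨max_le (hkle i).1 (hlle i).1, le_min (hkle i).2 (hlle i).2⟩
  -- the union is a box containing V
  have hUbox : IsBox (fun i => min (lk i) (ll i)) (fun i => max (uk i) (ul i)) := by
    intro i
    exact le_trans ((min_le_left _ _).trans (hkbox i)) (le_max_left _ _)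
  have hUle : BoxLE l u (fun i => min (lk i) (ll i)) (fun i => max (uk i) (ul i)) := by
    intro i
    exact ⟨(min_le_left _ _).trans (hkle i).1, (hkle i).2.trans (le_max_left _ _)⟩
  -- weight sums
  have hwsum : ∑ x ∈ N, weight lk uk x + ∑ x ∈ N, weight ll ul x ≤
      ∑ x ∈ N, weight (fun i => max (lk i) (ll i)) (fun i => min (uk i) (ul i)) x +
      ∑ x ∈ N, weight (fun i => min (lk i) (ll i)) (fun i => max (uk i) (ul i)) x := by
    rw [← Finset.sum_add_distrib, ← Finset.sum_add_distrib]
    exact Finset.sum_le_sum fun x _ => weight_ineq hn lk uk ll ul x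
  -- cost submodularity
  have hcost : cost α (fun i => max (lk i) (ll i)) (fun i => min (uk i) (ul i)) N +
      cost α (fun i => min (lk i) (ll i)) (fun i => max (uk i) (ul i)) N ≤
      cost α lk uk N + cost α ll ul N := by
    have hw := width_eq lk uk ll ul
    have hm := mul_le_mul_of_nonneg_left hwsum hα0
    unfold cost
    nlinarith [hm]
  -- both optimal solutions have the same cost
  have hck : cost α lk uk N = cost α ll ul N :=
    le_antisymm (hkopt ll ul hlbox hlle) (hlopt lk uk hkbox hkle)
  have h1 : cost α lk uk N ≤
      cost α (fun i => max (lk i) (ll i)) (fun i => min (uk i) (ul i)) N :=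
    hkopt _ _ hIbox hIle
  have h2 : cost α lk uk N ≤
      cost α (fun i => min (lk i) (ll i)) (fun i => max (uk i) (ul i)) N :=
    hkopt _ _ hUbox hUle
  have hIeq : cost α (fun i => max (lk i) (ll i)) (fun i => min (uk i) (ul i)) N =
      cost α lk uk N := by linarith
  exact ⟨hIbox, hIle, fun l'' u'' hb hle => hIeq ▸ hkopt l'' u'' hb hle⟩
end
end

section
/- Let n ≥ 1, let X ⊂ ℝⁿ be a finite point cloud, V a box in ℝⁿ, π > 0, α ∈ [0,1], and N = X ∩ B(V, π). If V^l and V^k are both optimal solutions in sol_α(V, N), then their box-union V^l ∪ V^k is also an optimal solution in sol_α(V, N). -/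
open scoped Classical

noncomputable section

open BoxFiltration

/-- Superadditivity of weights under box union/intersection. -/
lemma weight_union_inter {n : ℕ} (hn : 1 ≤ n) (lk uk ll ul x : Fin n → ℝ) :
    weight lk uk x + weight ll ul x ≤
      weight (fun i => min (lk i) (ll i)) (fun i => max (uk i) (ul i)) x +
        weight (fun i => max (lk i) (ll i)) (fun i => min (uk i) (ul i)) x := by
  have hne : Nonempty (Fin n) := ⟨⟨0, hn⟩⟩
  have hbdd : ∀ f : Fin n → ℝ, BddBelow (Set.range f) := fun f => (Set.finite_range f).bddBelow
  simp only [weight]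
  set gk : Fin n → ℝ := fun i => min (x i - lk i) (uk i - x i) with hgk
  set gl : Fin n → ℝ := fun i => min (x i - ll i) (ul i - x i) with hgl
  set gu : Fin n → ℝ := fun i => min (x i - min (lk i) (ll i)) (max (uk i) (ul i) - x i) with hgu
  set gi : Fin n → ℝ := fun i => min (x i - max (lk i) (ll i)) (min (uk i) (ul i) - x i) with hgi
  have hmono : ∀ f g : Fin n → ℝ, (∀ i, f i ≤ g i) →
      sInf (Set.range f) ≤ sInf (Set.range g) := by
    intro f g h
    apply le_csInf (Set.range_nonempty g)
    rintro _ ⟨i, rfl⟩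
    exact (csInf_le (hbdd f) (Set.mem_range_self i)).trans (h i)
  have hUk : sInf (Set.range gk) ≤ sInf (Set.range gu) := by
    apply hmono
    intro i
    exact min_le_min (sub_le_sub_left (min_le_left _ _) _)
      (sub_le_sub_right (le_max_left _ _) _)
  have hUl : sInf (Set.range gl) ≤ sInf (Set.range gu) := by
    apply hmono
    intro i
    exact min_le_min (sub_le_sub_left (min_le_right _ _) _)
      (sub_le_sub_right (le_max_right _ _) _)
  have hI : min (sInf (Set.range gk)) (sInf (Set.range gl)) ≤ sInf (Set.range gi) := by
    apply le_csInf (Set.range_nonempty gi)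
    rintro _ ⟨i, rfl⟩
    have h1 : min (sInf (Set.range gk)) (sInf (Set.range gl)) ≤ min (gk i) (gl i) :=
      min_le_min (csInf_le (hbdd _) (Set.mem_range_self i))
        (csInf_le (hbdd _) (Set.mem_range_self i))
    refine h1.trans (le_min ?_ ?_)
    · rcases le_total (lk i) (ll i) with h | h
      · rw [max_eq_right h]
        exact min_le_of_right_le (min_le_left _ _)
      · rw [max_eq_left h]
        exact min_le_of_left_le (min_le_left _ _)
    · rcases le_total (uk i) (ul i) with h | h
      · rw [min_eq_left h]
        exact min_le_of_left_le (min_le_right _ _)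
      · rw [min_eq_right h]
        exact min_le_of_right_le (min_le_right _ _)
  set A := sInf (Set.range gk)
  set B := sInf (Set.range gl)
  set U := sInf (Set.range gu)
  set I := sInf (Set.range gi)
  have h1 : min 0 A ≤ min 0 U := min_le_min le_rfl hUk
  have h2 : min 0 B ≤ min 0 U := min_le_min le_rfl hUl
  have h3 : min (min 0 A) (min 0 B) ≤ min 0 I := by
    have he : min (min 0 A) (min 0 B) = min 0 (min A B) := by
      rw [min_min_min_comm]; simp
    rw [he]
    exact min_le_min le_rfl hI
  rcases le_total (min 0 A) (min 0 B) with h | h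
  · rw [min_eq_left h] at h3; linarith
  · rw [min_eq_right h] at h3; linarith

/-- the box-union of two optimal solutions in `sol_α(V, N)`,
with `N = X ∩ B(V, π)`, is again an optimal solution. -/
theorem union_mem_optSol
    (n : ℕ) (hn : 1 ≤ n) (X : Finset (Fin n → ℝ)) (α π : ℝ)
    (hπ : 0 < π) (hα0 : 0 ≤ α) (hα1 : α ≤ 1)
    (l u lk uk ll ul : Fin n → ℝ) (hV : IsBox l u)
    (hk : OptSol α l u (nbhdPts X l u π) lk uk)
    (hl : OptSol α l u (nbhdPts X l u π) ll ul) :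
    OptSol α l u (nbhdPts X l u π)
      (fun i => min (lk i) (ll i)) (fun i => max (uk i) (ul i)) := by
  obtain ⟨hkbox, hkle, hkopt⟩ := hk
  obtain ⟨hlbox, hlle, hlopt⟩ := hl
  set N := nbhdPts X l u π with hN
  have hIbox : IsBox (fun i => max (lk i) (ll i)) (fun i => min (uk i) (ul i)) := by
    intro i
    exact le_trans (max_le (hkle i).1 (hlle i).1)
      (le_trans (hV i) (le_min (hkle i).2 (hlle i).2))
  have hIle : BoxLE l u (fun i => max (lk i) (ll i)) (fun i => min (uk i) (ul i)) := by
    intro i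
    exact ⟨max_le (hkle i).1 (hlle i).1, le_min (hkle i).2 (hlle i).2⟩
  have hCk : cost α lk uk N ≤
      cost α (fun i => max (lk i) (ll i)) (fun i => min (uk i) (ul i)) N :=
    hkopt _ _ hIbox hIle
  have hsum : ∑ x ∈ N, weight lk uk x + ∑ x ∈ N, weight ll ul x ≤
      ∑ x ∈ N, weight (fun i => min (lk i) (ll i)) (fun i => max (uk i) (ul i)) x +
        ∑ x ∈ N, weight (fun i => max (lk i) (ll i)) (fun i => min (uk i) (ul i)) x := by
    rw [← Finset.sum_add_distrib, ← Finset.sum_add_distrib]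
    exact Finset.sum_le_sum fun x _ => weight_union_inter hn lk uk ll ul x
  have hwidth : width (fun i => min (lk i) (ll i)) (fun i => max (uk i) (ul i)) +
      width (fun i => max (lk i) (ll i)) (fun i => min (uk i) (ul i)) =
      width lk uk + width ll ul := by
    simp only [width, ← Finset.sum_add_distrib]
    refine Finset.sum_congr rfl fun i _ => ?_
    have h1 := min_add_max (lk i) (ll i)
    have h2 := min_add_max (uk i) (ul i)
    ring_nf
    linarith
  have key : cost α (fun i => min (lk i) (ll i)) (fun i => max (uk i) (ul i)) N +
      cost α (fun i => max (lk i) (ll i)) (fun i => min (uk i) (ul i)) N ≤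
      cost α lk uk N + cost α ll ul N := by
    simp only [cost]
    have hmul := mul_le_mul_of_nonneg_left hsum hα0
    nlinarith [hwidth]
  refine ⟨?_, ?_, ?_⟩
  · intro i
    exact le_trans (min_le_left _ _) (le_trans (hkle i).1
      (le_trans (hV i) (le_trans (hkle i).2 (le_max_left _ _))))
  · intro i
    exact ⟨le_trans (min_le_left _ _) (hkle i).1, le_trans (hkle i).2 (le_max_left _ _)⟩
  · intro l'' u'' hb hc
    have h1 : cost α (fun i => min (lk i) (ll i)) (fun i => max (uk i) (ul i)) N ≤
        cost α ll ul N := by linarith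
    exact h1.trans (hlopt _ _ hb hc)
end
end

section
/- Let n ≥ 1, let X ⊂ ℝⁿ be a finite point cloud, V a box in ℝⁿ, 0 < π ≤ π̃, α ∈ [0,1], N = X ∩ B(V, π) and Ñ = X ∩ B(V, π̃). Suppose sol_α(V, N) is nonempty and let M₀ = ∩_{W ∈ sol_α(V, N)} W (a box containing V). Then for every box V' with V ⊆ V' and V' strictly contained in M₀, one has the strict inequality C_α(M₀, Ñ) < C_α(V', Ñ). -/
open scoped Classical

noncomputable section

namespace BoxFiltration

variable {n : ℕ}

/-- Lower endpoints of `M₀ = ⋂_{W ∈ sol_α(V, N)} W`: the sup of the lower endpoints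
of all optimal solutions. -/
def interSolLo (α : ℝ) (l u : Fin n → ℝ) (N : Finset (Fin n → ℝ)) : Fin n → ℝ :=
  fun i => sSup {r | ∃ l' u', OptSol α l u N l' u' ∧ r = l' i}

/-- Upper endpoints of `M₀ = ⋂_{W ∈ sol_α(V, N)} W`: the inf of the upper endpoints
of all optimal solutions. -/
def interSolHi (α : ℝ) (l u : Fin n → ℝ) (N : Finset (Fin n → ℝ)) : Fin n → ℝ :=
  fun i => sInf {r | ∃ l' u', OptSol α l u N l' u' ∧ r = u' i}

end BoxFiltration

namespace BoxFiltration

variable {n : ℕ}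

lemma range_bdd (x l u : Fin n → ℝ) :
    BddBelow (Set.range fun i => min (x i - l i) (u i - x i)) :=
  (Set.finite_range _).bddBelow

lemma weight_mono (hn : 0 < n) {l u L U : Fin n → ℝ} (h : BoxLE l u L U) (x : Fin n → ℝ) :
    weight l u x ≤ weight L U x := by
  have : Nonempty (Fin n) := ⟨⟨0, hn⟩⟩
  refine min_le_min le_rfl (le_csInf (Set.range_nonempty _) ?_)
  rintro b ⟨i, rfl⟩
  refine csInf_le_of_le (range_bdd x l u) ⟨i, rfl⟩ ?_
  exact min_le_min (by linarith [(h i).1]) (by linarith [(h i).2])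

lemma weight_sub_le (hn : 0 < n) {l u L U : Fin n → ℝ} {ε : ℝ} (hε : 0 ≤ ε)
    (hl : ∀ i, l i ≤ L i + ε) (hu : ∀ i, U i ≤ u i + ε) (x : Fin n → ℝ) :
    weight L U x - ε ≤ weight l u x := by
  have : Nonempty (Fin n) := ⟨⟨0, hn⟩⟩
  have h1 : sInf (Set.range fun i => min (x i - L i) (U i - x i)) - ε
      ≤ sInf (Set.range fun i => min (x i - l i) (u i - x i)) := by
    refine le_csInf (Set.range_nonempty _) ?_
    rintro b ⟨i, rfl⟩
    have h2 := csInf_le (range_bdd x L U) ⟨i, rfl⟩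
    simp only at h2
    have h3 := min_le_left (x i - L i) (U i - x i)
    have h4 := min_le_right (x i - L i) (U i - x i)
    have h5 := hl i; have h6 := hu i
    rw [le_min_iff]
    constructor <;> linarith
  unfold weight
  have h7 := min_le_left (0:ℝ) (sInf (Set.range fun i => min (x i - L i) (U i - x i)))
  have h8 := min_le_right (0:ℝ) (sInf (Set.range fun i => min (x i - L i) (U i - x i)))
  rw [le_min_iff]
  constructor <;> linarith

lemma weight_super (hn : 0 < n) (L1 U1 L2 U2 x : Fin n → ℝ) :
    weight L1 U1 x + weight L2 U2 x ≤
      weight (fun i => max (L1 i) (L2 i)) (fun i => min (U1 i) (U2 i)) x +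
      weight (fun i => min (L1 i) (L2 i)) (fun i => max (U1 i) (U2 i)) x := by
  have : Nonempty (Fin n) := ⟨⟨0, hn⟩⟩
  set F1 := sInf (Set.range fun i => min (x i - L1 i) (U1 i - x i)) with hF1
  set F2 := sInf (Set.range fun i => min (x i - L2 i) (U2 i - x i)) with hF2
  have hand : min F1 F2
      ≤ sInf (Set.range fun i => min (x i - max (L1 i) (L2 i)) (min (U1 i) (U2 i) - x i)) := by
    refine le_csInf (Set.range_nonempty _) ?_
    rintro b ⟨i, rfl⟩
    have h1 : F1 ≤ min (x i - L1 i) (U1 i - x i) := csInf_le (range_bdd x L1 U1) ⟨i, rfl⟩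
    have h2 : F2 ≤ min (x i - L2 i) (U2 i - x i) := csInf_le (range_bdd x L2 U2) ⟨i, rfl⟩
    have m1l := min_le_left (x i - L1 i) (U1 i - x i)
    have m1r := min_le_right (x i - L1 i) (U1 i - x i)
    have m2l := min_le_left (x i - L2 i) (U2 i - x i)
    have m2r := min_le_right (x i - L2 i) (U2 i - x i)
    have mf1 := min_le_left F1 F2
    have mf2 := min_le_right F1 F2
    simp only
    rw [le_min_iff]
    constructor
    · rcases le_total (L1 i) (L2 i) with h | h
      · rw [max_eq_right h]; linarith
      · rw [max_eq_left h]; linarith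
    · rcases le_total (U1 i) (U2 i) with h | h
      · rw [min_eq_left h]; linarith
      · rw [min_eq_right h]; linarith
  have hor1 : F1
      ≤ sInf (Set.range fun i => min (x i - min (L1 i) (L2 i)) (max (U1 i) (U2 i) - x i)) := by
    refine le_csInf (Set.range_nonempty _) ?_
    rintro b ⟨i, rfl⟩
    have h1 : F1 ≤ min (x i - L1 i) (U1 i - x i) := csInf_le (range_bdd x L1 U1) ⟨i, rfl⟩
    have m1l := min_le_left (x i - L1 i) (U1 i - x i)
    have m1r := min_le_right (x i - L1 i) (U1 i - x i)
    have h5 := min_le_left (L1 i) (L2 i)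
    have h6 := le_max_left (U1 i) (U2 i)
    simp only
    rw [le_min_iff]
    constructor <;> linarith
  have hor2 : F2
      ≤ sInf (Set.range fun i => min (x i - min (L1 i) (L2 i)) (max (U1 i) (U2 i) - x i)) := by
    refine le_csInf (Set.range_nonempty _) ?_
    rintro b ⟨i, rfl⟩
    have h1 : F2 ≤ min (x i - L2 i) (U2 i - x i) := csInf_le (range_bdd x L2 U2) ⟨i, rfl⟩
    have m1l := min_le_left (x i - L2 i) (U2 i - x i)
    have m1r := min_le_right (x i - L2 i) (U2 i - x i)
    have h5 := min_le_right (L1 i) (L2 i)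
    have h6 := le_max_right (U1 i) (U2 i)
    simp only
    rw [le_min_iff]
    constructor <;> linarith
  have hsum : min 0 (min F1 F2) + min 0 (max F1 F2) = min 0 F1 + min 0 F2 := by
    rcases le_total F1 F2 with h | h
    · rw [min_eq_left h, max_eq_right h]
    · rw [min_eq_right h, max_eq_left h]; ring
  have a1 : min 0 (min F1 F2)
      ≤ min 0 (sInf (Set.range fun i => min (x i - max (L1 i) (L2 i)) (min (U1 i) (U2 i) - x i))) :=
    min_le_min le_rfl hand
  have a2 : min 0 (max F1 F2)
      ≤ min 0 (sInf (Set.range fun i => min (x i - min (L1 i) (L2 i)) (max (U1 i) (U2 i) - x i))) :=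
    min_le_min le_rfl (max_le hor1 hor2)
  unfold weight
  simp only
  linarith

lemma width_inter_add (L1 U1 L2 U2 : Fin n → ℝ) :
    width (fun i => max (L1 i) (L2 i)) (fun i => min (U1 i) (U2 i)) +
      width (fun i => min (L1 i) (L2 i)) (fun i => max (U1 i) (U2 i)) =
      width L1 U1 + width L2 U2 := by
  unfold width
  rw [← Finset.sum_add_distrib, ← Finset.sum_add_distrib]
  refine Finset.sum_congr rfl fun i _ => ?_
  have h1 := min_add_max (L1 i) (L2 i)
  have h2 := min_add_max (U1 i) (U2 i)
  simp only
  linarith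

lemma optSol_inter (hn : 0 < n) {α : ℝ} (hα0 : 0 ≤ α) {l u : Fin n → ℝ} (hV : IsBox l u)
    {N : Finset (Fin n → ℝ)} {L1 U1 L2 U2 : Fin n → ℝ}
    (h1 : OptSol α l u N L1 U1) (h2 : OptSol α l u N L2 U2) :
    OptSol α l u N (fun i => max (L1 i) (L2 i)) (fun i => min (U1 i) (U2 i)) := by
  obtain ⟨hb1, hle1, hopt1⟩ := h1
  obtain ⟨hb2, hle2, hopt2⟩ := h2
  have hbI : IsBox (fun i => max (L1 i) (L2 i)) (fun i => min (U1 i) (U2 i)) := fun i => by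
    have g1 := (hle1 i).1; have g2 := (hle1 i).2
    have g3 := (hle2 i).1; have g4 := (hle2 i).2
    have g5 := hV i
    simp only [max_le_iff, le_min_iff]
    constructor <;> constructor <;> linarith
  have hleI : BoxLE l u (fun i => max (L1 i) (L2 i)) (fun i => min (U1 i) (U2 i)) := fun i => by
    have g1 := (hle1 i).1; have g2 := (hle1 i).2
    have g3 := (hle2 i).1; have g4 := (hle2 i).2
    simp only [max_le_iff, le_min_iff]
    constructor <;> constructor <;> linarith
  have hbU : IsBox (fun i => min (L1 i) (L2 i)) (fun i => max (U1 i) (U2 i)) := fun i => by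
    have g1 := hb1 i
    have g2 := min_le_left (L1 i) (L2 i); have g3 := le_max_left (U1 i) (U2 i)
    simp only
    linarith
  have hleU : BoxLE l u (fun i => min (L1 i) (L2 i)) (fun i => max (U1 i) (U2 i)) := fun i => by
    have g1 := (hle1 i).1; have g2 := (hle1 i).2
    have g3 := min_le_left (L1 i) (L2 i); have g4 := le_max_left (U1 i) (U2 i)
    simp only
    constructor <;> linarith
  have hwt : ∑ y ∈ N, weight L1 U1 y + ∑ y ∈ N, weight L2 U2 y ≤
      ∑ y ∈ N, weight (fun i => max (L1 i) (L2 i)) (fun i => min (U1 i) (U2 i)) y +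
      ∑ y ∈ N, weight (fun i => min (L1 i) (L2 i)) (fun i => max (U1 i) (U2 i)) y := by
    rw [← Finset.sum_add_distrib, ← Finset.sum_add_distrib]
    exact Finset.sum_le_sum fun y _ => weight_super hn L1 U1 L2 U2 y
  have hkey : cost α (fun i => max (L1 i) (L2 i)) (fun i => min (U1 i) (U2 i)) N +
      cost α (fun i => min (L1 i) (L2 i)) (fun i => max (U1 i) (U2 i)) N ≤
      cost α L1 U1 N + cost α L2 U2 N := by
    have hw := width_inter_add L1 U1 L2 U2
    have hmul := mul_le_mul_of_nonneg_left hwt hα0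
    unfold cost
    nlinarith [hmul, hw]
  refine ⟨hbI, hleI, fun W1 W2 hb hle => ?_⟩
  have hU := hopt1 _ _ hbU hleU
  have hW := hopt2 W1 W2 hb hle
  linarith

lemma optSol_le_interSolLo {α : ℝ} {l u : Fin n → ℝ} {N : Finset (Fin n → ℝ)}
    {L U : Fin n → ℝ} (h : OptSol α l u N L U) (i : Fin n) :
    L i ≤ interSolLo α l u N i := by
  refine le_csSup ⟨l i, ?_⟩ ⟨L, U, h, rfl⟩
  rintro r ⟨L', U', h', rfl⟩
  exact (h'.2.1 i).1

lemma interSolHi_le_optSol {α : ℝ} {l u : Fin n → ℝ} {N : Finset (Fin n → ℝ)}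
    {L U : Fin n → ℝ} (h : OptSol α l u N L U) (i : Fin n) :
    interSolHi α l u N i ≤ U i := by
  refine csInf_le ⟨u i, ?_⟩ ⟨L, U, h, rfl⟩
  rintro r ⟨L', U', h', rfl⟩
  exact (h'.2.1 i).2

lemma interSol_boxLE {α : ℝ} {l u : Fin n → ℝ} {N : Finset (Fin n → ℝ)}
    (hne : ∃ L U, OptSol α l u N L U) :
    BoxLE l u (interSolLo α l u N) (interSolHi α l u N) := by
  obtain ⟨L, U, h⟩ := hne
  intro i
  constructor
  · refine csSup_le ⟨L i, L, U, h, rfl⟩ ?_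
    rintro r ⟨L', U', h', rfl⟩
    exact (h'.2.1 i).1
  · refine le_csInf ⟨U i, L, U, h, rfl⟩ ?_
    rintro r ⟨L', U', h', rfl⟩
    exact (h'.2.1 i).2

lemma exists_optSol_close (hn : 0 < n) {α : ℝ} (hα0 : 0 ≤ α) {l u : Fin n → ℝ}
    (hV : IsBox l u) {N : Finset (Fin n → ℝ)}
    (hne : ∃ L U, OptSol α l u N L U) {ε : ℝ} (hε : 0 < ε) :
    ∀ s : Finset (Fin n), ∃ L U, OptSol α l u N L U ∧
      ∀ i ∈ s, interSolLo α l u N i - ε < L i ∧ U i < interSolHi α l u N i + ε := by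
  intro s
  induction s using Finset.induction_on with
  | empty =>
    obtain ⟨L, U, h⟩ := hne
    exact ⟨L, U, h, by simp⟩
  | @insert a s ha ih =>
    obtain ⟨L, U, hLU, hs⟩ := ih
    have hSlo : {r | ∃ l' u', OptSol α l u N l' u' ∧ r = l' a}.Nonempty :=
      ⟨L a, L, U, hLU, rfl⟩
    have hlt : interSolLo α l u N a - ε
        < sSup {r | ∃ l' u', OptSol α l u N l' u' ∧ r = l' a} := by
      unfold interSolLo; linarith
    obtain ⟨r, ⟨A, B, hAB, rfl⟩, hr⟩ := exists_lt_of_lt_csSup hSlo hlt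
    have hShi : {r | ∃ l' u', OptSol α l u N l' u' ∧ r = u' a}.Nonempty :=
      ⟨U a, L, U, hLU, rfl⟩
    have hlt2 : sInf {r | ∃ l' u', OptSol α l u N l' u' ∧ r = u' a}
        < interSolHi α l u N a + ε := by
      unfold interSolHi; linarith
    obtain ⟨r, ⟨C, D, hCD, rfl⟩, hr2⟩ := exists_lt_of_csInf_lt hShi hlt2
    refine ⟨fun i => max (max (L i) (A i)) (C i), fun i => min (min (U i) (B i)) (D i),
      optSol_inter hn hα0 hV (optSol_inter hn hα0 hV hLU hAB) hCD, ?_⟩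
    intro i hi
    rcases Finset.mem_insert.mp hi with rfl | hi
    · refine ⟨lt_of_lt_of_le hr ((le_max_right _ _).trans (le_max_left _ _)),
        lt_of_le_of_lt (min_le_right _ _) hr2⟩
    · exact ⟨lt_of_lt_of_le (hs i hi).1 ((le_max_left _ _).trans (le_max_left _ _)),
        lt_of_le_of_lt ((min_le_left _ _).trans (min_le_left _ _)) (hs i hi).2⟩

lemma cost_interSol_le (hn : 0 < n) {α : ℝ} (hα0 : 0 ≤ α) (hα1 : α ≤ 1)
    {l u : Fin n → ℝ} (hV : IsBox l u) {N : Finset (Fin n → ℝ)}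
    (hne : ∃ L U, OptSol α l u N L U)
    {W1 W2 : Fin n → ℝ} (hb : IsBox W1 W2) (hle : BoxLE l u W1 W2) :
    cost α (interSolLo α l u N) (interSolHi α l u N) N ≤ cost α W1 W2 N := by
  set mlo := interSolLo α l u N with hmlo
  set mhi := interSolHi α l u N with hmhi
  have key : ∀ ε : ℝ, 0 < ε → cost α mlo mhi N ≤ cost α W1 W2 N + α * N.card * ε := by
    intro ε hε
    obtain ⟨L, U, hLU, hclose⟩ := exists_optSol_close hn hα0 hV hne hε Finset.univ
    have hL : ∀ i, L i ≤ mlo i := fun i => optSol_le_interSolLo hLU i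
    have hU : ∀ i, mhi i ≤ U i := fun i => interSolHi_le_optSol hLU i
    have hwd : width mlo mhi ≤ width L U :=
      Finset.sum_le_sum fun i _ => by have := hL i; have := hU i; linarith
    have hwt : ∀ y, weight L U y - ε ≤ weight mlo mhi y := fun y =>
      weight_sub_le hn hε.le
        (fun i => by have := (hclose i (Finset.mem_univ i)).1; linarith)
        (fun i => by have := (hclose i (Finset.mem_univ i)).2; linarith) y
    have hsum : ∑ y ∈ N, weight L U y - N.card * ε ≤ ∑ y ∈ N, weight mlo mhi y := by
      have h := Finset.sum_le_sum (s := N) (fun y _ => hwt y)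
      rw [Finset.sum_sub_distrib, Finset.sum_const, nsmul_eq_mul] at h
      exact h
    have hopt := hLU.2.2 W1 W2 hb hle
    have hm1 := mul_le_mul_of_nonneg_left hsum hα0
    have hm2 := mul_le_mul_of_nonneg_left hwd (by linarith : (0:ℝ) ≤ 1 - α)
    unfold cost at hopt ⊢
    nlinarith [hm1, hm2, hopt]
  by_contra hcon
  push_neg at hcon
  set δ := cost α mlo mhi N - cost α W1 W2 N with hδ
  have hδpos : 0 < δ := by rw [hδ]; linarith
  have hKpos : (0:ℝ) < α * N.card + 1 := by positivity
  have h := key (δ / (α * N.card + 1)) (by positivity)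
  have hq : 0 < δ / (α * ↑N.card + 1) := by positivity
  have heq : α * ↑N.card * (δ / (α * ↑N.card + 1)) = δ - δ / (α * ↑N.card + 1) := by
    field_simp
    ring
  rw [hδ] at heq hq
  linarith

end BoxFiltration

open BoxFiltration

/-- the intersection `M₀` of all optimal solutions in `sol_α(V, N)` has
strictly smaller cost than any box `V'` with `V ⊆ V' ⊊ M₀`, even over the enlarged
neighborhood `Ñ = X ∩ B(V, π̃)` for `π ≤ π̃`. -/
theorem cost_interSol_lt_cost_strict_subbox
    (n : ℕ) (hn : 1 ≤ n) (X : Finset (Fin n → ℝ)) (α π π' : ℝ)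
    (hπ : 0 < π) (hππ' : π ≤ π') (hα0 : 0 ≤ α) (hα1 : α ≤ 1)
    (l u : Fin n → ℝ) (hV : IsBox l u)
    (hne : ∃ l' u', OptSol α l u (nbhdPts X l u π) l' u')
    (l' u' : Fin n → ℝ) (hb' : IsBox l' u') (hVsub : BoxLE l u l' u')
    (hstrict : boxSet l' u' ⊂
      boxSet (interSolLo α l u (nbhdPts X l u π)) (interSolHi α l u (nbhdPts X l u π))) :
    cost α (interSolLo α l u (nbhdPts X l u π)) (interSolHi α l u (nbhdPts X l u π))
        (nbhdPts X l u π') <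
      cost α l' u' (nbhdPts X l u π') := by
  have hnpos : 0 < n := hn
  set N := nbhdPts X l u π with hN
  set N' := nbhdPts X l u π' with hN'
  set mlo := interSolLo α l u N with hmlo
  set mhi := interSolHi α l u N with hmhi
  -- Step 1: strict inequality over N
  have hstep1 : cost α mlo mhi N < cost α l' u' N := by
    rcases lt_or_ge (cost α mlo mhi N) (cost α l' u' N) with h | h
    · exact h
    · exfalso
      have hopt' : OptSol α l u N l' u' :=
        ⟨hb', hVsub, fun L U hB hLE =>
          le_trans h (cost_interSol_le hnpos hα0 hα1 hV hne hB hLE)⟩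
      have h1 : ∀ i, l' i ≤ mlo i := fun i => optSol_le_interSolLo hopt' i
      have h2 : ∀ i, mhi i ≤ u' i := fun i => interSolHi_le_optSol hopt' i
      exact hstrict.2 fun x hx i => ⟨(h1 i).trans (hx i).1, (hx i).2.trans (h2 i)⟩
  -- V' ⊆ M₀ coordinatewise
  have hsubLE : BoxLE l' u' mlo mhi := by
    intro i
    have hl'mem : l' ∈ boxSet l' u' := fun j => ⟨le_rfl, hb' j⟩
    have hu'mem : u' ∈ boxSet l' u' := fun j => ⟨hb' j, le_rfl⟩
    exact ⟨(hstrict.1 hl'mem i).1, (hstrict.1 hu'mem i).2⟩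
  -- N ⊆ N'
  have hNsub : N ⊆ N' := by
    intro x hx
    rw [hN'] ; rw [hN] at hx
    simp only [nbhdPts, Finset.mem_filter] at hx ⊢
    refine ⟨hx.1, fun i => ?_⟩
    have h1 := (hx.2 i).1
    have h2 := (hx.2 i).2
    exact ⟨by linarith, by linarith⟩
  -- decompose cost over N' into cost over N plus the extra points
  have hdecomp : ∀ L U : Fin n → ℝ, cost α L U N' =
      cost α L U N + (-α) * ∑ x ∈ N' \ N, weight L U x := by
    intro L U
    unfold cost
    rw [← Finset.sum_sdiff hNsub]
    ring
  rw [hdecomp mlo mhi, hdecomp l' u']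
  have hwsum : ∑ x ∈ N' \ N, weight l' u' x ≤ ∑ x ∈ N' \ N, weight mlo mhi x :=
    Finset.sum_le_sum fun x _ => weight_mono hnpos hsubLE x
  have hmul := mul_le_mul_of_nonneg_left hwsum hα0
  nlinarith [hstep1, hmul]
end
end

section
/- Let n ≥ 1, let X ⊂ ℝⁿ be a finite point cloud, V a box in ℝⁿ, 0 < π ≤ π̃, α ∈ [0,1], N = X ∩ B(V, π) and Ñ = X ∩ B(V, π̃). Suppose sol_α(V, Ñ) is nonempty. Then for every V^l ∈ sol_α(V, N) there exists V^k ∈ sol_α(V, Ñ) such that V^l ⊆ V^k. -/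
open scoped Classical

noncomputable section

open BoxFiltration

section Aux

variable {n : ℕ}

lemma csInf_range_le' (f : Fin n → ℝ) (i : Fin n) :
    sInf (Set.range f) ≤ f i :=
  csInf_le (Set.finite_range f).bddBelow ⟨i, rfl⟩

lemma le_csInf_range' [Nonempty (Fin n)] (f : Fin n → ℝ) (a : ℝ)
    (h : ∀ i, a ≤ f i) : a ≤ sInf (Set.range f) :=
  le_csInf (Set.range_nonempty f) (by rintro b ⟨i, rfl⟩; exact h i)

lemma exists_csInf_range' [Nonempty (Fin n)] (f : Fin n → ℝ) :
    ∃ i, sInf (Set.range f) = f i := by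
  obtain ⟨i, hi⟩ := (Set.range_nonempty f).csInf_mem (Set.finite_range f)
  exact ⟨i, hi.symm⟩

lemma weight_mono' [Nonempty (Fin n)] {lA uA lB uB : Fin n → ℝ}
    (h : BoxLE lA uA lB uB) (x : Fin n → ℝ) :
    weight lA uA x ≤ weight lB uB x := by
  unfold weight
  refine min_le_min le_rfl (le_csInf_range' _ _ ?_)
  intro i
  calc sInf (Set.range fun i => min (x i - lA i) (uA i - x i))
      ≤ min (x i - lA i) (uA i - x i) := csInf_range_le' _ i
    _ ≤ min (x i - lB i) (uB i - x i) :=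
        min_le_min (by linarith [(h i).1]) (by linarith [(h i).2])

lemma weight_meet' [Nonempty (Fin n)] (lA uA lB uB x : Fin n → ℝ) :
    weight (fun i => max (lA i) (lB i)) (fun i => min (uA i) (uB i)) x
      = min (weight lA uA x) (weight lB uB x) := by
  set fA : Fin n → ℝ := fun i => min (x i - lA i) (uA i - x i) with hfA
  set fB : Fin n → ℝ := fun i => min (x i - lB i) (uB i - x i) with hfB
  have hfun : (fun i => min (x i - max (lA i) (lB i)) (min (uA i) (uB i) - x i))
      = fun i => min (fA i) (fB i) := by
    funext i
    simp only [hfA, hfB]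
    rw [← min_sub_sub_left, ← min_sub_sub_right, min_min_min_comm]
  have hInf : sInf (Set.range fun i => min (fA i) (fB i))
      = min (sInf (Set.range fA)) (sInf (Set.range fB)) := by
    apply le_antisymm
    · apply le_min
      · obtain ⟨i, hi⟩ := exists_csInf_range' fA
        calc sInf (Set.range fun i => min (fA i) (fB i)) ≤ min (fA i) (fB i) :=
              csInf_range_le' _ i
          _ ≤ fA i := min_le_left _ _
          _ = sInf (Set.range fA) := hi.symm
      · obtain ⟨i, hi⟩ := exists_csInf_range' fB
        calc sInf (Set.range fun i => min (fA i) (fB i)) ≤ min (fA i) (fB i) :=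
              csInf_range_le' _ i
          _ ≤ fB i := min_le_right _ _
          _ = sInf (Set.range fB) := hi.symm
    · apply le_csInf_range'
      intro i
      exact min_le_min (csInf_range_le' fA i) (csInf_range_le' fB i)
  unfold weight
  rw [hfun, hInf]
  rcases le_total (sInf (Set.range fA)) (sInf (Set.range fB)) with h | h
  · rw [min_eq_left h, min_eq_left (min_le_min le_rfl h)]
  · rw [min_eq_right h, min_eq_right (min_le_min le_rfl h)]

lemma width_join_meet' {n : ℕ} (lA uA lB uB : Fin n → ℝ) :
    width (fun i => min (lA i) (lB i)) (fun i => max (uA i) (uB i))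
      + width (fun i => max (lA i) (lB i)) (fun i => min (uA i) (uB i))
      = width lA uA + width lB uB := by
  unfold width
  rw [← Finset.sum_add_distrib, ← Finset.sum_add_distrib]
  apply Finset.sum_congr rfl
  intro i _
  have h1 := max_add_min (uA i) (uB i)
  have h2 := max_add_min (lA i) (lB i)
  linarith

end Aux

/-- every optimal solution over the neighborhood set `N = X ∩ B(V, π)` is
contained in some optimal solution over the enlarged neighborhood set `Ñ = X ∩ B(V, π̃)`,
`π ≤ π̃`, provided the latter set of optimal solutions is nonempty. -/
theorem exists_optSol_enlarged_containing
    (n : ℕ) (hn : 1 ≤ n) (X : Finset (Fin n → ℝ)) (α π π' : ℝ)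
    (hπ : 0 < π) (hππ' : π ≤ π') (hα0 : 0 ≤ α) (hα1 : α ≤ 1)
    (l u : Fin n → ℝ) (hV : IsBox l u)
    (hne : ∃ l' u', OptSol α l u (nbhdPts X l u π') l' u')
    (ll ul : Fin n → ℝ) (hl : OptSol α l u (nbhdPts X l u π) ll ul) :
    ∃ lk uk, OptSol α l u (nbhdPts X l u π') lk uk ∧ BoxLE ll ul lk uk := by
  have : Nonempty (Fin n) := ⟨⟨0, hn⟩⟩
  obtain ⟨lb, ub, hB⟩ := hne
  set N := nbhdPts X l u π with hN
  set N' := nbhdPts X l u π' with hN'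
  have hNsub : N ⊆ N' := by
    intro x hx
    simp only [hN, hN', nbhdPts, Finset.mem_filter, nbhd, Set.mem_setOf_eq] at hx ⊢
    exact ⟨hx.1, fun i => ⟨by linarith [(hx.2 i).1], by linarith [(hx.2 i).2]⟩⟩
  -- join and meet boxes
  set lk : Fin n → ℝ := fun i => min (ll i) (lb i) with hlk
  set uk : Fin n → ℝ := fun i => max (ul i) (ub i) with huk
  set lm : Fin n → ℝ := fun i => max (ll i) (lb i) with hlm
  set um : Fin n → ℝ := fun i => min (ul i) (ub i) with hum
  obtain ⟨hlBox, hlLE, hlOpt⟩ := hl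
  obtain ⟨hbBox, hbLE, hbOpt⟩ := hB
  have hmBox : IsBox lm um := fun i => by
    have h1 := (hlLE i).1; have h2 := (hlLE i).2
    have h3 := (hbLE i).1; have h4 := (hbLE i).2
    have h5 := hV i
    simp only [hlm, hum, max_le_iff, le_min_iff]
    constructor <;> constructor <;> linarith
  have hmLE : BoxLE l u lm um := fun i => by
    have h1 := (hlLE i).1; have h2 := (hlLE i).2
    have h3 := (hbLE i).1; have h4 := (hbLE i).2
    simp only [hlm, hum, max_le_iff, le_min_iff]
    constructor <;> constructor <;> linarith
  have hkBox : IsBox lk uk := fun i => by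
    have h1 := hlBox i
    simp only [hlk, huk]
    exact le_trans (min_le_left _ _) (le_trans h1 (le_max_left _ _))
  have hkLE : BoxLE l u lk uk := fun i => by
    have h1 := (hlLE i).1; have h2 := (hlLE i).2
    simp only [hlk, huk, min_le_iff, le_max_iff]
    exact ⟨Or.inl h1, Or.inl h2⟩
  have hmSubA : BoxLE lm um ll ul := fun i =>
    ⟨le_max_left _ _, min_le_left _ _⟩
  have hASubK : BoxLE ll ul lk uk := fun i =>
    ⟨min_le_left _ _, le_max_left _ _⟩
  have hBSubK : BoxLE lb ub lk uk := fun i =>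
    ⟨min_le_right _ _, le_max_right _ _⟩
  -- step 1: cost α ll ul N' ≤ cost α lm um N'
  have hsplitA : ∑ x ∈ N' \ N, weight ll ul x + ∑ x ∈ N, weight ll ul x
      = ∑ x ∈ N', weight ll ul x := Finset.sum_sdiff hNsub
  have hsplitM : ∑ x ∈ N' \ N, weight lm um x + ∑ x ∈ N, weight lm um x
      = ∑ x ∈ N', weight lm um x := Finset.sum_sdiff hNsub
  have hwdiff : ∑ x ∈ N' \ N, weight lm um x ≤ ∑ x ∈ N' \ N, weight ll ul x :=
    Finset.sum_le_sum fun x _ => weight_mono' hmSubA x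
  have hcostN : cost α ll ul N ≤ cost α lm um N := hlOpt lm um hmBox hmLE
  have step1 : cost α ll ul N' ≤ cost α lm um N' := by
    unfold cost at hcostN ⊢
    have h := mul_le_mul_of_nonneg_left hwdiff hα0
    rw [← hsplitA, ← hsplitM]
    nlinarith [h]
  -- step 2: submodularity over N'
  have hwsub : ∀ x ∈ N', weight ll ul x + weight lb ub x
      ≤ weight lk uk x + weight lm um x := by
    intro x _
    have hmeet := weight_meet' ll ul lb ub x
    have hA : weight ll ul x ≤ weight lk uk x := weight_mono' hASubK x
    have hB : weight lb ub x ≤ weight lk uk x := weight_mono' hBSubK x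
    rw [show weight lm um x = min (weight ll ul x) (weight lb ub x) from hmeet]
    rcases le_total (weight ll ul x) (weight lb ub x) with h | h
    · rw [min_eq_left h]; linarith
    · rw [min_eq_right h]; linarith
  have hsum : ∑ x ∈ N', (weight ll ul x + weight lb ub x)
      ≤ ∑ x ∈ N', (weight lk uk x + weight lm um x) := Finset.sum_le_sum hwsub
  rw [Finset.sum_add_distrib, Finset.sum_add_distrib] at hsum
  have hwidth := width_join_meet' ll ul lb ub
  have step2 : cost α lk uk N' + cost α lm um N' ≤ cost α ll ul N' + cost α lb ub N' := by
    unfold cost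
    have h := mul_le_mul_of_nonneg_left hsum hα0
    unfold width at hwidth ⊢
    nlinarith [h]
  -- step 3: optimality of B on meet
  have step3 : cost α lb ub N' ≤ cost α lm um N' := hbOpt lm um hmBox hmLE
  -- conclude: join has cost ≤ cost of B
  have hfinal : cost α lk uk N' ≤ cost α lb ub N' := by linarith
  refine ⟨lk, uk, ⟨hkBox, hkLE, fun l'' u'' hb'' hle'' => ?_⟩, hASubK⟩
  exact le_trans hfinal (hbOpt l'' u'' hb'' hle'')
end
end

section
/- Let n ≥ 1, let X ⊂ ℝⁿ be a finite point cloud, V a box in ℝⁿ, 0 < π ≤ π̃, α ∈ [0,1], N = X ∩ B(V, π) and Ñ = X ∩ B(V, π̃). Suppose sol_α(V, N) is nonempty. Then for every V^k ∈ sol_α(V, Ñ) there exists V^l ∈ sol_α(V, N) such that V^l ⊆ V^k. -/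
open scoped Classical

noncomputable section

open BoxFiltration

section Helpers

variable {n : ℕ}

private lemma my_weight_eq [Nonempty (Fin n)] (l u x : Fin n → ℝ) :
    weight l u x = min 0 (Finset.univ.inf' Finset.univ_nonempty
      fun i => min (x i - l i) (u i - x i)) := by
  rw [weight, Finset.inf'_eq_csInf_image, Finset.coe_univ, Set.image_univ]

private lemma my_weight_mono [Nonempty (Fin n)] {la ua lb ub : Fin n → ℝ}
    (h : BoxLE la ua lb ub) (x : Fin n → ℝ) : weight la ua x ≤ weight lb ub x := by
  rw [my_weight_eq, my_weight_eq]
  refine min_le_min le_rfl (Finset.le_inf' _ _ fun i _ => ?_)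
  refine le_trans (Finset.inf'_le _ (Finset.mem_univ i)) ?_
  exact min_le_min (by linarith [(h i).1]) (by linarith [(h i).2])

private lemma my_weight_supermod [Nonempty (Fin n)] (la ua lb ub x : Fin n → ℝ) :
    weight la ua x + weight lb ub x ≤
      weight (fun i => max (la i) (lb i)) (fun i => min (ua i) (ub i)) x +
      weight (fun i => min (la i) (lb i)) (fun i => max (ua i) (ub i)) x := by
  have hne : (Finset.univ : Finset (Fin n)).Nonempty := Finset.univ_nonempty
  rw [my_weight_eq, my_weight_eq, my_weight_eq, my_weight_eq]
  set A := Finset.univ.inf' hne fun i => min (x i - la i) (ua i - x i) with hA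
  set B := Finset.univ.inf' hne fun i => min (x i - lb i) (ub i - x i) with hB
  have hM : min A B ≤ Finset.univ.inf' Finset.univ_nonempty
      fun i => min (x i - max (la i) (lb i)) (min (ua i) (ub i) - x i) := by
    refine Finset.le_inf' _ _ fun i _ => ?_
    calc min A B
        ≤ min (min (x i - la i) (ua i - x i)) (min (x i - lb i) (ub i - x i)) :=
          min_le_min (Finset.inf'_le _ (Finset.mem_univ i)) (Finset.inf'_le _ (Finset.mem_univ i))
      _ = min (x i - max (la i) (lb i)) (min (ua i) (ub i) - x i) := by
          rw [min_min_min_comm, min_sub_sub_left, min_sub_sub_right]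
  have hJa : A ≤ Finset.univ.inf' Finset.univ_nonempty
      fun i => min (x i - min (la i) (lb i)) (max (ua i) (ub i) - x i) := by
    refine Finset.le_inf' _ _ fun i _ => ?_
    have hAi : A ≤ min (x i - la i) (ua i - x i) := Finset.inf'_le _ (Finset.mem_univ i)
    refine le_trans hAi ?_
    exact min_le_min (by linarith [min_le_left (la i) (lb i)])
      (by linarith [le_max_left (ua i) (ub i)])
  have hJb : B ≤ Finset.univ.inf' Finset.univ_nonempty
      fun i => min (x i - min (la i) (lb i)) (max (ua i) (ub i) - x i) := by
    refine Finset.le_inf' _ _ fun i _ => ?_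
    have hBi : B ≤ min (x i - lb i) (ub i - x i) := Finset.inf'_le _ (Finset.mem_univ i)
    refine le_trans hBi ?_
    exact min_le_min (by linarith [min_le_right (la i) (lb i)])
      (by linarith [le_max_right (ua i) (ub i)])
  have hJ : max A B ≤ Finset.univ.inf' Finset.univ_nonempty
      fun i => min (x i - min (la i) (lb i)) (max (ua i) (ub i) - x i) := max_le hJa hJb
  have h1 : min 0 A + min 0 B ≤ min 0 (min A B) + min 0 (max A B) := by
    rcases le_total A B with h | h <;>
      simp only [min_eq_left, min_eq_right, max_eq_left, max_eq_right, h] <;> linarith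
  have h2 : min 0 (min A B) ≤ min 0 (Finset.univ.inf' Finset.univ_nonempty
      fun i => min (x i - max (la i) (lb i)) (min (ua i) (ub i) - x i)) :=
    min_le_min le_rfl hM
  have h3 : min 0 (max A B) ≤ min 0 (Finset.univ.inf' Finset.univ_nonempty
      fun i => min (x i - min (la i) (lb i)) (max (ua i) (ub i) - x i)) :=
    min_le_min le_rfl hJ
  linarith

end Helpers

/-- every optimal solution over the enlarged neighborhood set
`Ñ = X ∩ B(V, π̃)`, `π ≤ π̃`, contains some optimal solution over the smaller
neighborhood set `N = X ∩ B(V, π)`, provided the latter set of optimal solutions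
is nonempty. -/
theorem exists_optSol_smaller_contained
    (n : ℕ) (hn : 1 ≤ n) (X : Finset (Fin n → ℝ)) (α π π' : ℝ)
    (hπ : 0 < π) (hππ' : π ≤ π') (hα0 : 0 ≤ α) (hα1 : α ≤ 1)
    (l u : Fin n → ℝ) (hV : IsBox l u)
    (hne : ∃ l' u', OptSol α l u (nbhdPts X l u π) l' u')
    (lk uk : Fin n → ℝ) (hk : OptSol α l u (nbhdPts X l u π') lk uk) :
    ∃ ll ul, OptSol α l u (nbhdPts X l u π) ll ul ∧ BoxLE ll ul lk uk := by
  haveI : Nonempty (Fin n) := Fin.pos_iff_nonempty.mp hn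
  obtain ⟨la, ua, ha⟩ := hne
  set N := nbhdPts X l u π with hN
  set N' := nbhdPts X l u π' with hN'
  have hsub : N ⊆ N' := by
    intro x hx
    simp only [hN, hN', nbhdPts, Finset.mem_filter, nbhd, Set.mem_setOf_eq] at hx ⊢
    exact ⟨hx.1, fun i => ⟨by linarith [(hx.2 i).1], by linarith [(hx.2 i).2]⟩⟩
  set lm : Fin n → ℝ := fun i => max (la i) (lk i) with hlm
  set um : Fin n → ℝ := fun i => min (ua i) (uk i) with hum
  set lj : Fin n → ℝ := fun i => min (la i) (lk i) with hlj
  set uj : Fin n → ℝ := fun i => max (ua i) (uk i) with huj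
  have hmLE : BoxLE l u lm um := fun i =>
    ⟨max_le (ha.2.1 i).1 (hk.2.1 i).1, le_min (ha.2.1 i).2 (hk.2.1 i).2⟩
  have hmBox : IsBox lm um := fun i => le_trans (hmLE i).1 (le_trans (hV i) (hmLE i).2)
  have hjLE : BoxLE l u lj uj := fun i =>
    ⟨le_trans (min_le_left _ _) (ha.2.1 i).1, le_trans (ha.2.1 i).2 (le_max_left _ _)⟩
  have hjBox : IsBox lj uj := fun i => le_trans (hjLE i).1 (le_trans (hV i) (hjLE i).2)
  have hkj : BoxLE lk uk lj uj := fun i => ⟨min_le_right _ _, le_max_right _ _⟩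
  have hmk : BoxLE lm um lk uk := fun i => ⟨le_max_right _ _, min_le_right _ _⟩
  have hwidth : width lm um + width lj uj = width la ua + width lk uk := by
    simp only [width, hlm, hum, hlj, huj, ← Finset.sum_add_distrib]
    refine Finset.sum_congr rfl fun i _ => ?_
    have h1 := min_add_max (la i) (lk i)
    have h2 := min_add_max (ua i) (uk i)
    linarith
  have hWsum : ∑ x ∈ N, weight la ua x + ∑ x ∈ N', weight lk uk x ≤
      ∑ x ∈ N, weight lm um x + ∑ x ∈ N', weight lj uj x := by
    rw [← Finset.sum_sdiff hsub (f := weight lk uk), ← Finset.sum_sdiff hsub (f := weight lj uj)]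
    have h1 : ∑ x ∈ N, weight la ua x + ∑ x ∈ N, weight lk uk x ≤
        ∑ x ∈ N, weight lm um x + ∑ x ∈ N, weight lj uj x := by
      rw [← Finset.sum_add_distrib, ← Finset.sum_add_distrib]
      exact Finset.sum_le_sum fun x _ => my_weight_supermod la ua lk uk x
    have h2 : ∑ x ∈ N' \ N, weight lk uk x ≤ ∑ x ∈ N' \ N, weight lj uj x :=
      Finset.sum_le_sum fun x _ => my_weight_mono hkj x
    linarith
  have hcost : cost α lm um N + cost α lj uj N' ≤ cost α la ua N + cost α lk uk N' := by
    simp only [cost]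
    have hm := mul_le_mul_of_nonneg_left hWsum hα0
    nlinarith [hwidth, hm]
  have hkopt : cost α lk uk N' ≤ cost α lj uj N' := hk.2.2 lj uj hjBox hjLE
  have hml : cost α lm um N ≤ cost α la ua N := by linarith
  exact ⟨lm, um, ⟨hmBox, hmLE, fun l'' u'' hb hle =>
    le_trans hml (ha.2.2 l'' u'' hb hle)⟩, hmk⟩
end
end

section
/- Let n ≥ 1, let X ⊂ ℝⁿ be a finite point cloud, V a box in ℝⁿ, π > 0, N = X ∩ B(V, π), and 0 ≤ α < α̃ ≤ 1. If M is a largest optimal solution in sol_α(V, N), then M ⊆ V^k for every V^k ∈ sol_{α̃}(V, N). -/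
open scoped Classical

noncomputable section

open BoxFiltration

section Aux

variable {n : ℕ}

lemma weight_mono_aux (hFn : Nonempty (Fin n)) {l1 u1 l2 u2 : Fin n → ℝ}
    (h : BoxLE l1 u1 l2 u2) (x : Fin n → ℝ) : weight l1 u1 x ≤ weight l2 u2 x := by
  unfold weight
  refine min_le_min le_rfl ?_
  refine le_csInf (Set.range_nonempty _) ?_
  rintro _ ⟨i, rfl⟩
  have h1 : sInf (Set.range fun i => min (x i - l1 i) (u1 i - x i)) ≤
      min (x i - l1 i) (u1 i - x i) :=
    csInf_le (Set.finite_range _).bddBelow ⟨i, rfl⟩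
  refine h1.trans (min_le_min ?_ ?_)
  · linarith [(h i).1]
  · linarith [(h i).2]

lemma weight_meet_aux (hFn : Nonempty (Fin n)) (l1 u1 l2 u2 x : Fin n → ℝ) :
    min (weight l1 u1 x) (weight l2 u2 x) ≤
      weight (fun i => max (l1 i) (l2 i)) (fun i => min (u1 i) (u2 i)) x := by
  unfold weight
  rw [min_min_min_comm]
  simp only [min_self]
  refine min_le_min le_rfl ?_
  refine le_csInf (Set.range_nonempty _) ?_
  rintro _ ⟨i, rfl⟩
  have h1 : sInf (Set.range fun i => min (x i - l1 i) (u1 i - x i)) ≤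
      min (x i - l1 i) (u1 i - x i) :=
    csInf_le (Set.finite_range _).bddBelow ⟨i, rfl⟩
  have h2 : sInf (Set.range fun i => min (x i - l2 i) (u2 i - x i)) ≤
      min (x i - l2 i) (u2 i - x i) :=
    csInf_le (Set.finite_range _).bddBelow ⟨i, rfl⟩
  have e1 : x i - max (l1 i) (l2 i) = min (x i - l1 i) (x i - l2 i) := by
    rcases le_total (l1 i) (l2 i) with h | h
    · rw [max_eq_right h, min_eq_right (by linarith)]
    · rw [max_eq_left h, min_eq_left (by linarith)]
  have e2 : min (u1 i) (u2 i) - x i = min (u1 i - x i) (u2 i - x i) := by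
    rcases le_total (u1 i) (u2 i) with h | h
    · rw [min_eq_left h, min_eq_left (by linarith)]
    · rw [min_eq_right h, min_eq_right (by linarith)]
  beta_reduce
  rw [e1, e2]
  have : min (min (x i - l1 i) (x i - l2 i)) (min (u1 i - x i) (u2 i - x i)) =
      min (min (x i - l1 i) (u1 i - x i)) (min (x i - l2 i) (u2 i - x i)) :=
    min_min_min_comm _ _ _ _
  rw [this]
  exact min_le_min h1 h2

end Aux

/-- for `α < α̃`, the largest optimal solution of `sol_α(V, N)` is contained
in every optimal solution of `sol_{α̃}(V, N)`. -/
theorem largestOptSol_subset_optSol_of_alpha_lt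
    (n : ℕ) (hn : 1 ≤ n) (X : Finset (Fin n → ℝ)) (π : ℝ) (hπ : 0 < π)
    (α α' : ℝ) (hα0 : 0 ≤ α) (hαα' : α < α') (hα'1 : α' ≤ 1)
    (l u : Fin n → ℝ) (hV : IsBox l u)
    (Ml Mu : Fin n → ℝ) (hM : LargestOptSol α l u (nbhdPts X l u π) Ml Mu)
    (lk uk : Fin n → ℝ) (hk : OptSol α' l u (nbhdPts X l u π) lk uk) :
    BoxLE Ml Mu lk uk := by
  have hFn : Nonempty (Fin n) := ⟨⟨0, hn⟩⟩
  obtain ⟨⟨hMbox, hMcont, hMopt⟩, -⟩ := hM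
  obtain ⟨hkbox, hkcont, hkopt⟩ := hk
  set N := nbhdPts X l u π with hN
  -- meet and join boxes
  set wl : Fin n → ℝ := fun i => max (Ml i) (lk i) with hwl
  set wu : Fin n → ℝ := fun i => min (Mu i) (uk i) with hwu
  set jl : Fin n → ℝ := fun i => min (Ml i) (lk i) with hjl
  set ju : Fin n → ℝ := fun i => max (Mu i) (uk i) with hju
  have hWbox : IsBox wl wu := fun i =>
    (max_le (hMcont i).1 (hkcont i).1).trans ((hV i).trans (le_min (hMcont i).2 (hkcont i).2))
  have hWcont : BoxLE l u wl wu := fun i =>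
    ⟨max_le (hMcont i).1 (hkcont i).1, le_min (hMcont i).2 (hkcont i).2⟩
  have hJbox : IsBox jl ju := fun i =>
    (min_le_left _ _).trans ((hMbox i).trans (le_max_left _ _))
  have hJcont : BoxLE l u jl ju := fun i =>
    ⟨(min_le_left _ _).trans (hMcont i).1, (hMcont i).2.trans (le_max_left _ _)⟩
  have hMJ : BoxLE Ml Mu jl ju := fun i => ⟨min_le_left _ _, le_max_left _ _⟩
  have hKJ : BoxLE lk uk jl ju := fun i => ⟨min_le_right _ _, le_max_right _ _⟩
  have h1 := hMopt wl wu hWbox hWcont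
  have h2 := hkopt jl ju hJbox hJcont
  -- width is modular
  have hwidth : width wl wu + width jl ju = width Ml Mu + width lk uk := by
    unfold width
    rw [← Finset.sum_add_distrib, ← Finset.sum_add_distrib]
    refine Finset.sum_congr rfl fun i _ => ?_
    have e1 := min_add_max (Mu i) (uk i)
    have e2 := min_add_max (Ml i) (lk i)
    simp only [hwl, hwu, hjl, hju]
    linarith
  -- total weight is supermodular
  have hsum : ∑ x ∈ N, weight Ml Mu x + ∑ x ∈ N, weight lk uk x ≤
      ∑ x ∈ N, weight wl wu x + ∑ x ∈ N, weight jl ju x := by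
    rw [← Finset.sum_add_distrib, ← Finset.sum_add_distrib]
    refine Finset.sum_le_sum fun x _ => ?_
    have hmeet := weight_meet_aux hFn Ml Mu lk uk x
    have hjm := weight_mono_aux hFn hMJ x
    have hjk := weight_mono_aux hFn hKJ x
    have hmm := min_add_max (weight Ml Mu x) (weight lk uk x)
    have hmax : max (weight Ml Mu x) (weight lk uk x) ≤ weight jl ju x := max_le hjm hjk
    linarith
  unfold cost at h1 h2
  set SM := ∑ x ∈ N, weight Ml Mu x
  set SK := ∑ x ∈ N, weight lk uk x
  set SW := ∑ x ∈ N, weight wl wu x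
  set SJ := ∑ x ∈ N, weight jl ju x
  set WM := width Ml Mu
  set WK := width lk uk
  set WW := width wl wu
  set WJ := width jl ju
  have hα'0 : 0 ≤ α' := hα0.trans hαα'.le
  have e1 : (1 - α) * (WJ - WK) ≤ α * (SJ - SK) := by
    have hs : SM - SW ≤ SJ - SK := by linarith
    nlinarith [mul_le_mul_of_nonneg_left hs hα0]
  have e2 : α' * (SJ - SK) ≤ (1 - α') * (WJ - WK) := by nlinarith
  have e3 : (α' - α) * (WJ - WK) ≤ 0 := by
    nlinarith [mul_le_mul_of_nonneg_left e1 hα'0, mul_le_mul_of_nonneg_left e2 hα0]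
  have hΔw : 0 ≤ WJ - WK := by
    have : WJ - WK = ∑ i, ((ju i - jl i) - (uk i - lk i)) := by
      simp only [WJ, WK, width, ← Finset.sum_sub_distrib]
    rw [this]
    refine Finset.sum_nonneg fun i _ => ?_
    have := (hKJ i).1
    have := (hKJ i).2
    simp only [hjl, hju] at *
    linarith
  have e4 : 0 ≤ (α' - α) * (WJ - WK) := mul_nonneg (by linarith) hΔw
  have e5 : WJ - WK = 0 := by
    rcases mul_eq_zero.1 (le_antisymm e3 e4) with h | h
    · exact absurd h (by intro h'; linarith)
    · exact h
  -- conclude coordinatewise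
  have hsum0 : ∑ i, ((ju i - jl i) - (uk i - lk i)) = 0 := by
    have : WJ - WK = ∑ i, ((ju i - jl i) - (uk i - lk i)) := by
      simp only [WJ, WK, width, ← Finset.sum_sub_distrib]
    linarith [this ▸ e5]
  have hterm : ∀ i ∈ Finset.univ, 0 ≤ (ju i - jl i) - (uk i - lk i) := by
    intro i _
    have := (hKJ i).1
    have := (hKJ i).2
    linarith
  have hall := (Finset.sum_eq_zero_iff_of_nonneg hterm).1 hsum0
  intro i
  have hi := hall i (Finset.mem_univ i)
  have h1' : jl i ≤ lk i := (hKJ i).1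
  have h2' : uk i ≤ ju i := (hKJ i).2
  have hmin : min (Ml i) (lk i) = lk i := by
    simp only [hjl, hju] at hi h1' h2' ⊢
    linarith
  have hmax : max (Mu i) (uk i) = uk i := by
    simp only [hjl, hju] at hi h1' h2' ⊢
    linarith
  exact ⟨min_eq_right_iff.1 hmin, max_eq_right_iff.1 hmax⟩
end
end

section
/- Let N ⊆ ℝⁿ be a set, V ⊆ N a box, σ a unit pixel with θ(σ) ≠ 0 and centroid m_σ ∈ N, and r ∈ {1, 2, 3}; assume ψ_r(l_i) ≤ ψ_r(u_i) for all i, so that Ψ_r(V) is a box. If the pixel weight of σ with respect to V = ∏_i [l_i, u_i] satisfies w̄_V(σ) = m_σ^i − l_i for some coordinate i, then the pixel weight of σ with respect to the rounded box satisfies w̄_{Ψ_r(V)}(σ) = m_σ^i − ψ_r(l_i); and if w̄_V(σ) = u_i − m_σ^i for some i, then w̄_{Ψ_r(V)}(σ) = ψ_r(u_i) − m_σ^i. -/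
open scoped Classical

noncomputable section

namespace BoxFiltration

variable {n : ℕ}

/-- The unit pixel containing `x`: the pixel with integer base point `fun i => ⌊x i⌋`
(pixels are taken half-open, so each point lies in exactly one pixel). -/
def pixelOf (x : Fin n → ℝ) : Fin n → ℤ := fun i => ⌊x i⌋

/-- The (half-open) unit pixel with base point `k : Fin n → ℤ`. -/
def pixelSet (k : Fin n → ℤ) : Set (Fin n → ℝ) :=
  {x | ∀ i, (k i : ℝ) ≤ x i ∧ x i < (k i : ℝ) + 1}

/-- The closed unit pixel (cube) with base point `k`. -/
def closedPixelSet (k : Fin n → ℤ) : Set (Fin n → ℝ) :=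
  {x | ∀ i, (k i : ℝ) ≤ x i ∧ x i ≤ (k i : ℝ) + 1}

/-- The centroid `m_σ` of the unit pixel with base point `k`. -/
def centroid (k : Fin n → ℤ) : Fin n → ℝ := fun i => (k i : ℝ) + 1 / 2

/-- `θ(σ)`: the number of points of `X` in the unit pixel with base point `k`. -/
def theta (X : Finset (Fin n → ℝ)) (k : Fin n → ℤ) : ℕ :=
  (X.filter fun x => pixelOf x = k).card

/-- `Θ(N)`: the pixels `σ` with `m_σ ∈ N` and `θ(σ) ≠ 0`. -/
def Theta (X : Finset (Fin n → ℝ)) (N : Set (Fin n → ℝ)) : Finset (Fin n → ℤ) :=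
  (X.image pixelOf).filter fun k => centroid k ∈ N

/-- Pixel weight of a pixel with centroid `m` w.r.t. the box `(l, u)`:
`w̄_V(σ) = min {1/2, min_i (m i - l i), min_i (u i - m i)}`. -/
def pweight (l u m : Fin n → ℝ) : ℝ :=
  min (1 / 2) (sInf (Set.range fun i => min (m i - l i) (u i - m i)))

/-- Pixel cost `C̄_α(V, N) = -α ∑_{σ ∈ Θ(N)} θ(σ) w̄_V(σ) + (1 - α)|V|`. -/
def pcost (α : ℝ) (l u : Fin n → ℝ) (X : Finset (Fin n → ℝ)) (N : Set (Fin n → ℝ)) : ℝ :=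
  -α * ∑ k ∈ Theta X N, (theta X k : ℝ) * pweight l u (centroid k) +
    (1 - α) * width l u

/-- `(l', u') ∈ s̄ol_α(V, N)`: pixel-optimal solution for input box `V = (l, u)`. -/
def POptSol (α : ℝ) (l u : Fin n → ℝ) (X : Finset (Fin n → ℝ)) (N : Set (Fin n → ℝ))
    (l' u' : Fin n → ℝ) : Prop :=
  IsBox l' u' ∧ BoxLE l u l' u' ∧
    ∀ l'' u'', IsBox l'' u'' → BoxLE l u l'' u'' →
      pcost α l' u' X N ≤ pcost α l'' u'' X N

/-- A largest pixel-optimal solution contains every pixel-optimal solution. -/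
def LargestPOptSol (α : ℝ) (l u : Fin n → ℝ) (X : Finset (Fin n → ℝ))
    (N : Set (Fin n → ℝ)) (l' u' : Fin n → ℝ) : Prop :=
  POptSol α l u X N l' u' ∧ ∀ l'' u'', POptSol α l u X N l'' u'' → BoxLE l'' u'' l' u'

/-- Rounding `ψ_r` applied to a lower endpoint, for `r = 1, 2, 3`. -/
def psil : ℕ → ℝ → ℝ
  | 1 => fun t => (⌈t⌉ : ℝ)
  | 2 => fun t =>
      if 1 / 2 < Int.fract t then (⌈t⌉ : ℝ)
      else if 0 < Int.fract t then (⌊t⌋ : ℝ) + 1 / 2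
      else t
  | _ => fun t => if 1 / 2 < Int.fract t then (⌈t⌉ : ℝ) else (⌊t⌋ : ℝ)

/-- Rounding `ψ_r` applied to an upper endpoint, for `r = 1, 2, 3`. -/
def psiu : ℕ → ℝ → ℝ
  | 1 => fun t => (⌊t⌋ : ℝ)
  | 2 => fun t => if 1 / 2 ≤ Int.fract t then (⌊t⌋ : ℝ) + 1 / 2 else (⌊t⌋ : ℝ)
  | _ => fun t => if 1 / 2 ≤ Int.fract t then (⌈t⌉ : ℝ) else (⌊t⌋ : ℝ)

end BoxFiltration

/-! Each rounding `ψ_r` snaps endpoints to a lattice (`ℤ` or `½ℤ`) compatible with the centroids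
`ℤ + 1/2`, so the distance from a centroid to a rounded endpoint is a fixed monotone function `g`
of the distance to the original endpoint, the same for every coordinate and, by the symmetry
`ψ_r(l) = -ψ_r(-l)`, for lower and upper endpoints alike. Since moreover `g (1/2) = 1/2`, `g`
commutes with every minimum in the definition of the pixel weight, hence
`w̄_{Ψ_r(V)}(σ) = g (w̄_V(σ))`, and a coordinate realizing `w̄_V(σ)` realizes `w̄_{Ψ_r(V)}(σ)`. -/

theorem Monotone.map_ciInf_of_finite {α β ι : Type*} [ConditionallyCompleteLinearOrder α]
    [ConditionallyCompleteLinearOrder β] [Nonempty ι] [Finite ι] {g : α → β} (hg : Monotone g)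
    (f : ι → α) : g (⨅ i, f i) = ⨅ i, g (f i) := by
  obtain ⟨i, hi⟩ := exists_eq_ciInf_of_finite (f := f)
  rw [← hi]
  exact le_antisymm (le_ciInf fun j => hg (hi ▸ ciInf_le (Finite.bddBelow_range f) j))
    (ciInf_le (Finite.bddBelow_range _) i)

namespace BoxFiltration

theorem _root_.Monotone.map_pweight {n : ℕ} [Nonempty (Fin n)] {l u L U m : Fin n → ℝ}
    {g : ℝ → ℝ} (hg : Monotone g) (hg_half : g (1 / 2) = 1 / 2)
    (hL : ∀ j, m j - L j = g (m j - l j)) (hU : ∀ j, U j - m j = g (u j - m j)) :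
    pweight L U m = g (pweight l u m) := by
  change min (1 / 2) (⨅ j, min (m j - L j) (U j - m j)) =
    g (min (1 / 2) (⨅ j, min (m j - l j) (u j - m j)))
  simp only [hL, hU, ← hg.map_min, ← hg.map_ciInf_of_finite]
  rw [hg.map_min, hg_half]

theorem psil_two (t : ℝ) : psil 2 t = ⌈2 * t⌉ / 2 := by
  have ht := Int.floor_add_fract t
  have hf₀ := Int.fract_nonneg t
  have hf₁ := Int.fract_lt_one t
  simp only [psil]
  split_ifs
  · have hc : ⌈t⌉ = ⌊t⌋ + 1 := by rw [Int.ceil_eq_iff]; push_cast; constructor <;> linarith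
    have hc₂ : ⌈2 * t⌉ = 2 * ⌊t⌋ + 2 := by
      rw [Int.ceil_eq_iff]; push_cast; constructor <;> linarith
    rw [hc, hc₂]; push_cast; ring
  · have : ⌈2 * t⌉ = 2 * ⌊t⌋ + 1 := by
      rw [Int.ceil_eq_iff]; push_cast; constructor <;> linarith
    rw [this]; push_cast; ring
  · have : ⌈2 * t⌉ = 2 * ⌊t⌋ := by rw [Int.ceil_eq_iff]; push_cast; constructor <;> linarith
    rw [this]; push_cast; linarith

theorem psiu_two (t : ℝ) : psiu 2 t = ⌊2 * t⌋ / 2 := by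
  have ht := Int.floor_add_fract t
  have hf₀ := Int.fract_nonneg t
  have hf₁ := Int.fract_lt_one t
  simp only [psiu]
  split_ifs
  · have : ⌊2 * t⌋ = 2 * ⌊t⌋ + 1 := by
      rw [Int.floor_eq_iff]; push_cast; constructor <;> linarith
    rw [this]; push_cast; ring
  · have : ⌊2 * t⌋ = 2 * ⌊t⌋ := by rw [Int.floor_eq_iff]; push_cast; constructor <;> linarith
    rw [this]; push_cast; ring

theorem psil_three (t : ℝ) : psil 3 t = ⌈t - 1 / 2⌉ := by
  have ht := Int.floor_add_fract t
  have hf₀ := Int.fract_nonneg t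
  have hf₁ := Int.fract_lt_one t
  simp only [psil]
  split_ifs
  · have hc : ⌈t⌉ = ⌊t⌋ + 1 := by rw [Int.ceil_eq_iff]; push_cast; constructor <;> linarith
    have hc₃ : ⌈t - 1 / 2⌉ = ⌊t⌋ + 1 := by
      rw [Int.ceil_eq_iff]; push_cast; constructor <;> linarith
    rw [hc, hc₃]
  · have : ⌈t - 1 / 2⌉ = ⌊t⌋ := by rw [Int.ceil_eq_iff]; constructor <;> linarith
    rw [this]

theorem psiu_three (t : ℝ) : psiu 3 t = ⌊t + 1 / 2⌋ := by
  have ht := Int.floor_add_fract t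
  have hf₀ := Int.fract_nonneg t
  have hf₁ := Int.fract_lt_one t
  simp only [psiu]
  split_ifs
  · have hc : ⌈t⌉ = ⌊t⌋ + 1 := by rw [Int.ceil_eq_iff]; push_cast; constructor <;> linarith
    have hf₃ : ⌊t + 1 / 2⌋ = ⌊t⌋ + 1 := by
      rw [Int.floor_eq_iff]; push_cast; constructor <;> linarith
    rw [hc, hf₃]
  · have : ⌊t + 1 / 2⌋ = ⌊t⌋ := by rw [Int.floor_eq_iff]; constructor <;> linarith
    rw [this]

theorem exists_psiu_sub_centroid {r : ℕ} (hr : r ∈ ({1, 2, 3} : Set ℕ)) :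
    ∃ g : ℝ → ℝ, Monotone g ∧ g (1 / 2) = 1 / 2 ∧
      ∀ (k : ℤ) (t : ℝ), psiu r t - (k + 1 / 2) = g (t - (k + 1 / 2)) := by
  rcases hr with rfl | rfl | rfl
  · refine ⟨fun d => ⌊d - 1 / 2⌋ + 1 / 2, fun a b h => by dsimp only; gcongr, by norm_num,
      fun k t => ?_⟩
    beta_reduce
    rw [show t - (k + 1 / 2) - 1 / 2 = t - ((k + 1 : ℤ) : ℝ) by push_cast; ring,
      Int.floor_sub_intCast]
    push_cast [psiu]; ring
  · refine ⟨fun d => ⌊2 * d⌋ / 2, fun a b h => by dsimp only; gcongr, by norm_num,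
      fun k t => ?_⟩
    beta_reduce
    rw [psiu_two, show 2 * (t - (k + 1 / 2)) = 2 * t - ((2 * k + 1 : ℤ) : ℝ) by push_cast; ring,
      Int.floor_sub_intCast]
    push_cast; ring
  · refine ⟨fun d => ⌊d⌋ + 1 / 2, fun a b h => by dsimp only; gcongr, by norm_num,
      fun k t => ?_⟩
    beta_reduce
    rw [psiu_three, show t - (k + 1 / 2) = t + 1 / 2 - ((k + 1 : ℤ) : ℝ) by push_cast; ring,
      Int.floor_sub_intCast]
    push_cast; ring

theorem psil_eq_neg_psiu_neg {r : ℕ} (hr : r ∈ ({1, 2, 3} : Set ℕ)) (t : ℝ) :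
    psil r t = -psiu r (-t) := by
  rcases hr with rfl | rfl | rfl
  · simp [psil, psiu, Int.floor_neg]
  · rw [psil_two, psiu_two, mul_neg, Int.floor_neg]; push_cast; ring
  · rw [psil_three, psiu_three, show -t + 1 / 2 = -(t - 1 / 2) by ring, Int.floor_neg]
    push_cast; ring

-- `t ↦ -t` maps the centroid `k + 1/2` to the centroid `(-k - 1) + 1/2`.
theorem centroid_sub_psil {r : ℕ} (hr : r ∈ ({1, 2, 3} : Set ℕ)) {g : ℝ → ℝ}
    (hU : ∀ (k : ℤ) (t : ℝ), psiu r t - (k + 1 / 2) = g (t - (k + 1 / 2))) (k : ℤ) (t : ℝ) :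
    k + 1 / 2 - psil r t = g (k + 1 / 2 - t) :=
  calc k + 1 / 2 - psil r t = psiu r (-t) - ((-k - 1 : ℤ) + 1 / 2) := by
        rw [psil_eq_neg_psiu_neg hr]; push_cast; ring
    _ = g (k + 1 / 2 - t) := by rw [hU]; congr 1; push_cast; ring

end BoxFiltration

open BoxFiltration

theorem pweight_rounding_direction_general
    (n : ℕ) (l u : Fin n → ℝ)
    (k : Fin n → ℤ)
    (r : ℕ) (hr : r ∈ ({1, 2, 3} : Set ℕ)) :
    (∀ i, pweight l u (centroid k) = centroid k i - l i →
        pweight (fun j => psil r (l j)) (fun j => psiu r (u j)) (centroid k) =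
          centroid k i - psil r (l i)) ∧
    (∀ i, pweight l u (centroid k) = u i - centroid k i →
        pweight (fun j => psil r (l j)) (fun j => psiu r (u j)) (centroid k) =
          psiu r (u i) - centroid k i) := by
  obtain ⟨g, hg, hg_half, hU⟩ := exists_psiu_sub_centroid hr
  have hL := centroid_sub_psil hr hU
  have hpweight (i : Fin n) : pweight (fun j => psil r (l j)) (fun j => psiu r (u j))
      (centroid k) = g (pweight l u (centroid k)) :=
    haveI : Nonempty (Fin n) := ⟨i⟩
    hg.map_pweight hg_half (fun j => hL (k j) (l j)) (fun j => hU (k j) (u j))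
  refine ⟨fun i hi => ?_, fun i hi => ?_⟩
  · rw [hpweight i, hi]; exact (hL (k i) (l i)).symm
  · rw [hpweight i, hi]; exact (hU (k i) (u i)).symm

/-- the coordinate determining the pixel weight of a pixel `σ` (with
`θ(σ) ≠ 0` and centroid in `N`) w.r.t. a box `V ⊆ N` still determines its pixel weight
w.r.t. each rounded box `Ψ_r(V)`, `r = 1, 2, 3`. -/
theorem pweight_rounding_direction
    (n : ℕ) (hn : 1 ≤ n) (X : Finset (Fin n → ℝ)) (N : Set (Fin n → ℝ))
    (l u : Fin n → ℝ) (hV : IsBox l u) (hVN : boxSet l u ⊆ N)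
    (k : Fin n → ℤ) (hθ : theta X k ≠ 0) (hm : centroid k ∈ N)
    (r : ℕ) (hr : r ∈ ({1, 2, 3} : Set ℕ))
    (hΨbox : ∀ i, psil r (l i) ≤ psiu r (u i)) :
    (∀ i, pweight l u (centroid k) = centroid k i - l i →
        pweight (fun j => psil r (l j)) (fun j => psiu r (u j)) (centroid k) =
          centroid k i - psil r (l i)) ∧
    (∀ i, pweight l u (centroid k) = u i - centroid k i →
        pweight (fun j => psil r (l j)) (fun j => psiu r (u j)) (centroid k) =
          psiu r (u i) - centroid k i) :=
  pweight_rounding_direction_general n l u k r hr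
end
end

section
/- Let n ≥ 1, let X ⊂ ℝⁿ be a finite point cloud, let V be a box in ℝⁿ all of whose interval endpoints are integers, let π be a positive integer, α ∈ [0,1], and N = B(V, π). If V* ∈ s̄ol_α(V, N) is a pixel-optimal solution, then the three rounded boxes Ψ₁(V*), Ψ₂(V*), and Ψ₃(V*) are also pixel-optimal solutions in s̄ol_α(V, N). -/
open scoped Classical

noncomputable section

namespace BoxFiltration

variable {n : ℕ}

open Finset

def slk (ls us : Fin n → ℝ) (k : Fin n → ℤ) : Fin n ⊕ Fin n → ℝ :=
  Sum.elim (fun i => centroid k i - ls i) (fun i => us i - centroid k i)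

lemma univ_ne [NeZero n] : (univ : Finset (Fin n ⊕ Fin n)).Nonempty := univ_nonempty

lemma pweight_eq_inf' [NeZero n] (ls us : Fin n → ℝ) (k : Fin n → ℤ) :
    pweight ls us (centroid k)
      = min (1/2) ((univ : Finset (Fin n ⊕ Fin n)).inf' univ_ne (slk ls us k)) := by
  unfold pweight
  congr 1
  have h1 : sInf (Set.range fun i => min (centroid k i - ls i) (us i - centroid k i))
      = (univ : Finset (Fin n)).inf' univ_nonempty
          (fun i => min (centroid k i - ls i) (us i - centroid k i)) := by
    rw [Finset.inf'_eq_csInf_image]; simp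
  rw [h1]
  apply le_antisymm
  · apply Finset.le_inf'
    intro e _
    cases e with
    | inl i => exact le_trans (Finset.inf'_le _ (mem_univ i)) (min_le_left _ _)
    | inr i => exact le_trans (Finset.inf'_le _ (mem_univ i)) (min_le_right _ _)
  · apply Finset.le_inf'
    intro i _
    exact le_min (Finset.inf'_le _ (mem_univ (Sum.inl i))) (Finset.inf'_le _ (mem_univ (Sum.inr i)))

lemma pweight_le_half [NeZero n] (ls us : Fin n → ℝ) (k : Fin n → ℤ) :
    pweight ls us (centroid k) ≤ 1/2 := by
  rw [pweight_eq_inf']; exact min_le_left _ _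

lemma pweight_le_slk [NeZero n] (ls us : Fin n → ℝ) (k : Fin n → ℤ) (e : Fin n ⊕ Fin n) :
    pweight ls us (centroid k) ≤ slk ls us k e := by
  rw [pweight_eq_inf']
  exact le_trans (min_le_right _ _) (Finset.inf'_le _ (mem_univ e))

lemma pweight_ge_of_slk [NeZero n] (lsa usa lsb usb : Fin n → ℝ) (k : Fin n → ℤ) (c : ℝ)
    (hc : 0 ≤ c)
    (h : ∀ e, slk lsa usa k e - c ≤ slk lsb usb k e) :
    pweight lsa usa (centroid k) - c ≤ pweight lsb usb (centroid k) := by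
  rw [pweight_eq_inf', pweight_eq_inf', ← min_sub_sub_right]
  apply min_le_min (by linarith)
  apply Finset.le_inf'
  intro e _
  have h1 : (univ : Finset (Fin n ⊕ Fin n)).inf' univ_ne (slk lsa usa k) ≤ slk lsa usa k e :=
    Finset.inf'_le _ (mem_univ e)
  have := h e
  linarith

lemma le_pweight [NeZero n] (ls us : Fin n → ℝ) (k : Fin n → ℤ) (c : ℝ)
    (hc : c ≤ 1/2) (h : ∀ e, c ≤ slk ls us k e) :
    c ≤ pweight ls us (centroid k) := by
  rw [pweight_eq_inf']
  exact le_min hc (Finset.le_inf' _ _ (fun e _ => h e))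

lemma grid_step {go a b : ℝ} (hgo : 0 < go) (z1 z2 : ℤ)
    (ha : a = 1/2 + go * z1) (hb : b = 1/2 + go * z2) (h : a < b) : a + go ≤ b := by
  have hz : z1 < z2 := by
    by_contra hz
    push_neg at hz
    have : (z2 : ℝ) ≤ z1 := by exact_mod_cast hz
    nlinarith
  have : (z1 : ℝ) + 1 ≤ z2 := by exact_mod_cast hz
  nlinarith

set_option maxHeartbeats 2000000 in
lemma master [NeZero n] (X : Finset (Fin n → ℝ)) (N : Set (Fin n → ℝ))
    (l u : Fin n → ℝ) (hV : IsBox l u)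
    (α : ℝ) (hα0 : 0 ≤ α) (hα1 : α ≤ 1)
    (ls us : Fin n → ℝ) (hopt : POptSol α l u X N ls us)
    (go lo : ℝ) (hgo2 : 1/2 ≤ go) (hgoZ : ∃ z : ℤ, (1:ℝ) = go * z)
    (hlo1 : -go ≤ lo) (hlo0 : lo < 0) (hlo2 : lo + go ≤ 1/2)
    (ls' us' : Fin n → ℝ)
    (hcl : ∀ i, ls' i ≤ l i) (hcu : ∀ i, u i ≤ us' i)
    (hgl : ∀ i, ∃ z : ℤ, ls' i = go * z) (hgu : ∀ i, ∃ z : ℤ, us' i = go * z)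
    (hrl : ∀ i, lo < ls i - ls' i ∧ ls i - ls' i ≤ lo + go)
    (hru : ∀ i, lo < us' i - us i ∧ us' i - us i ≤ lo + go)
    (hrooml : ∀ i, ls' i < ls i → ls i < l i)
    (hroomu : ∀ i, us i < us' i → u i < us i) :
    POptSol α l u X N ls' us' := by
  obtain ⟨hbox0, hle0, hmin0⟩ := hopt
  have hgo : (0:ℝ) < go := lt_of_lt_of_le (by norm_num) hgo2
  set γ : Fin n ⊕ Fin n → ℝ :=
    Sum.elim (fun i => ls i - ls' i) (fun i => us' i - us i) with hγdef
  have hγl : ∀ i, γ (Sum.inl i) = ls i - ls' i := fun i => rfl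
  have hγu : ∀ i, γ (Sum.inr i) = us' i - us i := fun i => rfl
  have hγr : ∀ e, lo < γ e ∧ γ e ≤ lo + go := by
    intro e; cases e with
    | inl i => exact hrl i
    | inr i => exact hru i
  have hbox' : IsBox ls' us' := fun i => le_trans (hcl i) (le_trans (hV i) (hcu i))
  have hle' : BoxLE l u ls' us' := fun i => ⟨hcl i, hcu i⟩
  refine ⟨hbox', hle', fun l'' u'' h1 h2 => le_trans ?_ (hmin0 l'' u'' h1 h2)⟩
  -- abbreviations
  set Θ := Theta X N with hΘdef
  have hθ0 : ∀ k : Fin n → ℤ, (0:ℝ) ≤ (theta X k : ℝ) := fun k => Nat.cast_nonneg _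
  -- slack relation
  have hsl' : ∀ (k : Fin n → ℤ) e, slk ls' us' k e = slk ls us k e + γ e := by
    intro k e; cases e with
    | inl i => simp only [slk, Sum.elim_inl, hγl]; ring
    | inr i => simp only [slk, Sum.elim_inr, hγu]; ring
  -- grid facts
  obtain ⟨zg, hzg⟩ := hgoZ
  have hgrid : ∀ (k : Fin n → ℤ) e, ∃ z : ℤ, slk ls' us' k e = 1/2 + go * z := by
    intro k e
    cases e with
    | inl i =>
      obtain ⟨z, hz⟩ := hgl i
      refine ⟨zg * (k i) - z, ?_⟩
      simp only [slk, Sum.elim_inl, centroid, hz]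
      push_cast
      linear_combination ((k i : ℝ)) * hzg
    | inr i =>
      obtain ⟨z, hz⟩ := hgu i
      refine ⟨z - zg * (k i) - zg, ?_⟩
      simp only [slk, Sum.elim_inr, centroid, hz]
      push_cast
      linear_combination (-(k i : ℝ) - 1) * hzg
  -- coherence of ties
  have hγeq : ∀ (k : Fin n → ℤ) e e', slk ls us k e = slk ls us k e' → γ e = γ e' := by
    intro k e e' hs
    obtain ⟨z1, h1⟩ := hgrid k e
    obtain ⟨z2, h2⟩ := hgrid k e'
    have q1 := hsl' k e
    have q2 := hsl' k e'
    have hd : γ e - γ e' = go * ((z1:ℝ) - z2) := by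
      have : slk ls us k e + γ e = 1/2 + go * z1 := by rw [← q1, h1]
      have : slk ls us k e' + γ e' = 1/2 + go * z2 := by rw [← q2, h2]
      nlinarith [hs]
    have hb1 : -go < γ e - γ e' := by linarith [(hγr e).1, (hγr e').2]
    have hb2 : γ e - γ e' < go := by linarith [(hγr e).2, (hγr e').1]
    have hz : z1 = z2 := by
      have c1 : (-1 : ℝ) < (z1:ℝ) - z2 := by nlinarith
      have c2 : ((z1:ℝ) - z2) < 1 := by nlinarith
      have c1' : (-1 : ℤ) < z1 - z2 := by exact_mod_cast (by push_cast; linarith : (-1:ℝ) < ((z1 - z2 : ℤ) : ℝ))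
      have c2' : (z1 - z2 : ℤ) < 1 := by exact_mod_cast (by push_cast; linarith : ((z1 - z2 : ℤ) : ℝ) < 1)
      omega
    rw [hz] at hd
    simp at hd
    linarith
  -- minimality transfer: a minimal slack stays minimal after rounding
  have hcmin : ∀ (k : Fin n → ℤ) e, slk ls us k e = pweight ls us (centroid k) →
      ∀ e', slk ls' us' k e ≤ slk ls' us' k e' := by
    intro k e he e'
    by_cases hs : slk ls us k e' = slk ls us k e
    · rw [hsl', hsl', hs, hγeq k e' e hs]
    · have hlt : slk ls us k e < slk ls us k e' := by
        have := pweight_le_slk ls us k e'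
        rw [← he] at this
        exact lt_of_le_of_ne this (Ne.symm hs)
      by_contra hcon
      push_neg at hcon
      obtain ⟨z1, h1⟩ := hgrid k e'
      obtain ⟨z2, h2⟩ := hgrid k e
      have hstep := grid_step hgo z1 z2 h1 h2 hcon
      have q1 := hsl' k e'; have q2 := hsl' k e
      have : γ e' ≤ lo := by linarith [(hγr e).2]
      linarith [(hγr e').1]
  -- F2 : an exact outward-rounded minimal slack gives exact weight gain
  have F2 : ∀ (k : Fin n → ℤ) e, 0 < γ e → slk ls us k e = pweight ls us (centroid k) →
      pweight ls us (centroid k) < 1/2 →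
      pweight ls us (centroid k) - pweight ls' us' (centroid k) = -γ e := by
    intro k e hγpos hes hWlt
    have h2 := hcmin k e hes
    have hinf : (univ : Finset (Fin n ⊕ Fin n)).inf' univ_ne (slk ls' us' k) = slk ls' us' k e :=
      le_antisymm (Finset.inf'_le _ (mem_univ e)) (Finset.le_inf' _ _ (fun e' _ => h2 e'))
    obtain ⟨z, hz⟩ := hgrid k e
    have q := hsl' k e
    have hc1 : slk ls' us' k e < 1 := by linarith [(hγr e).2]
    have hc2 : slk ls' us' k e ≤ 1/2 := by
      rcases le_or_gt z 0 with hz0 | hz0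
      · have : go * (z:ℝ) ≤ 0 := by
          have : (z:ℝ) ≤ 0 := by exact_mod_cast hz0
          nlinarith
        linarith [hz]
      · have h1z : (1:ℝ) ≤ (z:ℝ) := by exact_mod_cast hz0
        nlinarith [hz]
    have hW' : pweight ls' us' (centroid k) = slk ls' us' k e := by
      rw [pweight_eq_inf', hinf, min_eq_right hc2]
    rw [hW']
    linarith
  -- F1 : weight loss is witnessed by an inward-rounded minimal slack
  have F1 : ∀ (k : Fin n → ℤ),
      0 < pweight ls us (centroid k) - pweight ls' us' (centroid k) →
      ∃ e, γ e < 0 ∧ slk ls us k e = pweight ls us (centroid k) ∧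
        pweight ls us (centroid k) < 1/2 ∧
        pweight ls us (centroid k) - pweight ls' us' (centroid k) = -γ e := by
    intro k hD
    obtain ⟨estar, _, hestar⟩ := Finset.exists_mem_eq_inf' (univ_ne (n := n)) (slk ls us k)
    have hsmin : ∀ e, slk ls us k estar ≤ slk ls us k e := by
      intro e; rw [← hestar]; exact Finset.inf'_le _ (mem_univ e)
    obtain ⟨e0, _, he0⟩ := Finset.exists_mem_eq_inf' (univ_ne (n := n)) (slk ls' us' k)
    have hWhalf := pweight_le_half ls us k
    have he0lt : slk ls' us' k e0 < pweight ls us (centroid k) := by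
      by_contra hcon
      push_neg at hcon
      have : pweight ls us (centroid k) ≤ pweight ls' us' (centroid k) := by
        rw [pweight_eq_inf' ls' us', he0]
        exact le_min hWhalf hcon
      linarith
    have hWlt : pweight ls us (centroid k) < 1/2 := by
      rcases lt_or_eq_of_le hWhalf with h | h
      · exact h
      · exfalso
        obtain ⟨z0, hz0⟩ := hgrid k e0
        have hstep : slk ls' us' k e0 + go ≤ 1/2 :=
          grid_step hgo z0 0 hz0 (by ring) (by rw [← h]; exact he0lt)
        have q := hsl' k e0
        have hse0 : pweight ls us (centroid k) ≤ slk ls us k e0 := pweight_le_slk ls us k e0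
        have : γ e0 ≤ -go := by linarith [h ▸ hse0]
        linarith [(hγr e0).1, hlo1]
    have hWs : pweight ls us (centroid k) = slk ls us k estar := by
      rw [pweight_eq_inf', hestar]
      rcases le_or_gt (slk ls us k estar) (1/2) with h | h
      · exact min_eq_right h
      · exfalso
        have : pweight ls us (centroid k) = 1/2 := by rw [pweight_eq_inf', hestar, min_eq_left (le_of_lt h)]
        linarith
    have hγstar : γ estar < 0 := by
      by_contra hge
      push_neg at hge
      have hlt2 : slk ls' us' k e0 < slk ls' us' k estar := by
        have q := hsl' k estar
        have : slk ls us k estar ≤ slk ls' us' k estar := by linarith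
        linarith [hWs ▸ he0lt]
      obtain ⟨z1, h1⟩ := hgrid k e0
      obtain ⟨z2, h2⟩ := hgrid k estar
      have hstep := grid_step hgo z1 z2 h1 h2 hlt2
      have q1 := hsl' k e0
      have q2 := hsl' k estar
      have hse0 : slk ls us k estar ≤ slk ls us k e0 := hsmin e0
      have : γ e0 ≤ γ estar - go := by linarith
      linarith [(hγr e0).1, (hγr estar).2]
    have h2 := hcmin k estar hWs.symm
    have hinf : (univ : Finset (Fin n ⊕ Fin n)).inf' univ_ne (slk ls' us' k) = slk ls' us' k estar :=
      le_antisymm (Finset.inf'_le _ (mem_univ estar)) (Finset.le_inf' _ _ (fun e' _ => h2 e'))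
    have q := hsl' k estar
    have hW' : pweight ls' us' (centroid k) = slk ls' us' k estar := by
      rw [pweight_eq_inf', hinf, min_eq_right (by linarith [hWs])]
    exact ⟨estar, hγstar, hWs.symm, hWlt, by rw [hW']; linarith [hWs]⟩
  -- generic cost comparison for perturbed boxes
  have hcompare : ∀ d : Fin n ⊕ Fin n → ℝ,
      (∀ i, ls i - d (Sum.inl i) ≤ l i) → (∀ i, u i ≤ us i + d (Sum.inr i)) →
      α * ∑ k ∈ Θ, (theta X k : ℝ) *
          (pweight (fun i => ls i - d (Sum.inl i)) (fun i => us i + d (Sum.inr i)) (centroid k)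
            - pweight ls us (centroid k))
        ≤ (1 - α) * ∑ e, d e := by
    intro d hdl hdu
    have hboxd : IsBox (fun i => ls i - d (Sum.inl i)) (fun i => us i + d (Sum.inr i)) :=
      fun i => le_trans (hdl i) (le_trans (hV i) (hdu i))
    have hled : BoxLE l u _ _ := fun i => ⟨hdl i, hdu i⟩
    have hpc := hmin0 _ _ hboxd hled
    have hwidth : width (fun i => ls i - d (Sum.inl i)) (fun i => us i + d (Sum.inr i))
        = width ls us + ∑ e, d e := by
      unfold width
      rw [Fintype.sum_sum_type, ← Finset.sum_add_distrib, ← Finset.sum_add_distrib]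
      apply Finset.sum_congr rfl
      intro i _
      ring
    unfold pcost at hpc
    rw [hwidth] at hpc
    have hsplit : ∑ k ∈ Θ, (theta X k : ℝ) *
          (pweight (fun i => ls i - d (Sum.inl i)) (fun i => us i + d (Sum.inr i)) (centroid k)
            - pweight ls us (centroid k))
        = (∑ k ∈ Θ, (theta X k : ℝ) *
            pweight (fun i => ls i - d (Sum.inl i)) (fun i => us i + d (Sum.inr i)) (centroid k))
          - ∑ k ∈ Θ, (theta X k : ℝ) * pweight ls us (centroid k) := by
      rw [← Finset.sum_sub_distrib]
      apply Finset.sum_congr rfl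
      intro k _
      ring
    rw [hsplit]
    rw [← hΘdef] at hpc
    nlinarith [hpc]
  -- slacks of perturbed boxes
  have hslkd : ∀ (d : Fin n ⊕ Fin n → ℝ) (k : Fin n → ℤ) e,
      slk (fun i => ls i - d (Sum.inl i)) (fun i => us i + d (Sum.inr i)) k e
        = slk ls us k e + d e := by
    intro d k e
    cases e with
    | inl i => simp only [slk, Sum.elim_inl]; ring
    | inr i => simp only [slk, Sum.elim_inr]; ring
  -- choice of the perturbation size η
  set room : Fin n ⊕ Fin n → ℝ := Sum.elim (fun i => l i - ls i) (fun i => us i - u i)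
    with hroomdef
  set T : Finset ℝ :=
      (((Θ ×ˢ (univ : Finset (Fin n ⊕ Fin n))).image
          fun p => slk ls us p.1 p.2 - pweight ls us (centroid p.1))
        ∪ (Θ.image fun k => 1/2 - pweight ls us (centroid k))
        ∪ ((univ : Finset (Fin n ⊕ Fin n)).image room)) with hTdef
  obtain ⟨η, hηpos, hηle⟩ : ∃ η : ℝ, 0 < η ∧ ∀ x ∈ T, 0 < x → η ≤ x := by
    have hSne : (insert (1:ℝ) (T.filter (fun x => 0 < x))).Nonempty :=
      ⟨1, Finset.mem_insert_self _ _⟩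
    refine ⟨(insert (1:ℝ) (T.filter (fun x => 0 < x))).min' hSne, ?_, ?_⟩
    · have hmem := Finset.min'_mem _ hSne
      rcases Finset.mem_insert.1 hmem with h | h
      · rw [h]; norm_num
      · exact (Finset.mem_filter.1 h).2
    · intro x hx hxpos
      exact Finset.min'_le _ _ (Finset.mem_insert_of_mem (Finset.mem_filter.2 ⟨hx, hxpos⟩))
  have hgap : ∀ k ∈ Θ, ∀ e, pweight ls us (centroid k) < slk ls us k e →
      pweight ls us (centroid k) + η ≤ slk ls us k e := by
    intro k hk e h
    have hmem : slk ls us k e - pweight ls us (centroid k) ∈ T := by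
      rw [hTdef]
      apply Finset.mem_union_left
      apply Finset.mem_union_left
      exact Finset.mem_image.2 ⟨(k, e), Finset.mem_product.2 ⟨hk, mem_univ e⟩, rfl⟩
    have := hηle _ hmem (by linarith)
    linarith
  have hcap : ∀ k ∈ Θ, pweight ls us (centroid k) < 1/2 →
      pweight ls us (centroid k) + η ≤ 1/2 := by
    intro k hk h
    have hmem : 1/2 - pweight ls us (centroid k) ∈ T := by
      rw [hTdef]
      apply Finset.mem_union_left
      apply Finset.mem_union_right
      exact Finset.mem_image.2 ⟨k, hk, rfl⟩
    have := hηle _ hmem (by linarith)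
    linarith
  have hroomle : ∀ e, 0 < room e → η ≤ room e := by
    intro e h
    have hmem : room e ∈ T := by
      rw [hTdef]
      exact Finset.mem_union_right _ (Finset.mem_image.2 ⟨e, mem_univ e, rfl⟩)
    exact hηle _ hmem h
  -- groups and their critical pixels
  set pred : ℝ → (Fin n → ℤ) → Prop := fun v k =>
    pweight ls us (centroid k) < 1/2 ∧ ∃ e, γ e = v ∧ slk ls us k e = pweight ls us (centroid k)
    with hpreddef
  set P : ℝ → Finset (Fin n → ℤ) := fun v => Θ.filter (pred v) with hPdef
  set G : ℝ → Finset (Fin n ⊕ Fin n) := fun v =>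
    (univ : Finset (Fin n ⊕ Fin n)).filter (fun e => γ e = v) with hGdef
  have hPmemiff : ∀ v k, k ∈ P v ↔ k ∈ Θ ∧ pred v k := by
    intro v k
    rw [hPdef]
    exact Finset.mem_filter
  -- KEY 1 : growing a group bounds the critical mass from above
  have key1 : ∀ v : ℝ, α * ∑ k ∈ P v, (theta X k : ℝ) ≤ (1 - α) * ((G v).card : ℝ) := by
    intro v
    set d : Fin n ⊕ Fin n → ℝ := fun e => if γ e = v then η else 0 with hddef
    have hd0 : ∀ e, 0 ≤ d e := by
      intro e; rw [hddef]; dsimp only; split <;> linarith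
    have h1 := hcompare d (fun i => by have h := (hle0 i).1; have h' := hd0 (Sum.inl i); linarith)
      (fun i => by have h := (hle0 i).2; have h' := hd0 (Sum.inr i); linarith)
    have hsumd : ∑ e, d e = ((G v).card : ℝ) * η := by
      rw [hddef, hGdef]
      dsimp only
      rw [← Finset.sum_filter, Finset.sum_const, nsmul_eq_mul]
    have hWd0 : ∀ k : Fin n → ℤ, pweight ls us (centroid k)
        ≤ pweight (fun i => ls i - d (Sum.inl i)) (fun i => us i + d (Sum.inr i)) (centroid k) := by
      intro k
      have := pweight_ge_of_slk ls us (fun i => ls i - d (Sum.inl i))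
        (fun i => us i + d (Sum.inr i)) k 0 le_rfl
        (fun e => by rw [hslkd]; have := hd0 e; linarith)
      linarith
    have hWdP : ∀ k ∈ P v, pweight ls us (centroid k) + η
        ≤ pweight (fun i => ls i - d (Sum.inl i)) (fun i => us i + d (Sum.inr i)) (centroid k) := by
      intro k hkP
      obtain ⟨hkΘ, hWlt, e1, he1v, he1s⟩ := (hPmemiff v k).1 hkP
      apply le_pweight
      · exact hcap k hkΘ hWlt
      · intro e
        rw [hslkd]
        by_cases hev : γ e = v
        · have hde : d e = η := by rw [hddef]; dsimp only; exact if_pos hev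
          have := pweight_le_slk ls us k e
          linarith
        · have hne : slk ls us k e ≠ pweight ls us (centroid k) := by
            intro heq
            exact hev (by rw [hγeq k e e1 (by rw [heq, he1s])]; exact he1v)
          have hlt : pweight ls us (centroid k) < slk ls us k e :=
            lt_of_le_of_ne (pweight_le_slk ls us k e) (Ne.symm hne)
          have := hgap k hkΘ e hlt
          have := hd0 e
          linarith
    have hsum1 : ∑ k ∈ P v, ((theta X k : ℝ) * η)
        ≤ ∑ k ∈ Θ, (theta X k : ℝ) *
            (pweight (fun i => ls i - d (Sum.inl i)) (fun i => us i + d (Sum.inr i)) (centroid k)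
              - pweight ls us (centroid k)) := by
      have hstep1 : ∑ k ∈ P v, ((theta X k : ℝ) * η)
          ≤ ∑ k ∈ P v, (theta X k : ℝ) *
              (pweight (fun i => ls i - d (Sum.inl i)) (fun i => us i + d (Sum.inr i)) (centroid k)
                - pweight ls us (centroid k)) := by
        apply Finset.sum_le_sum
        intro k hk
        have h := hWdP k hk
        exact mul_le_mul_of_nonneg_left (by linarith) (hθ0 k)
      apply le_trans hstep1
      apply Finset.sum_le_sum_of_subset_of_nonneg (by rw [hPdef]; exact Finset.filter_subset _ _)
      intro k _ _
      exact mul_nonneg (hθ0 k) (by linarith [hWd0 k])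
    rw [hsumd] at h1
    have hfin : (α * ∑ k ∈ P v, (theta X k : ℝ)) * η ≤ ((1 - α) * ((G v).card : ℝ)) * η := by
      have h2 : α * ∑ k ∈ P v, ((theta X k : ℝ) * η) ≤ (1 - α) * (((G v).card : ℝ) * η) :=
        le_trans (mul_le_mul_of_nonneg_left hsum1 hα0) h1
      rw [← Finset.sum_mul] at h2
      nlinarith [h2]
    exact le_of_mul_le_mul_right hfin hηpos
  -- KEY 2 : shrinking a group bounds the critical mass from below
  have key2 : ∀ v : ℝ, 0 < v →
      (1 - α) * ((G v).card : ℝ) ≤ α * ∑ k ∈ P v, (theta X k : ℝ) := by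
    intro v hv
    set d : Fin n ⊕ Fin n → ℝ := fun e => if γ e = v then -η else 0 with hddef
    have hd0 : ∀ e, d e ≤ 0 := by
      intro e; rw [hddef]; dsimp only; split <;> linarith
    have hdη : ∀ e, -η ≤ d e := by
      intro e; rw [hddef]; dsimp only; split <;> linarith
    have hfl : ∀ i, ls i - d (Sum.inl i) ≤ l i := by
      intro i
      rw [hddef]
      dsimp only
      split
      · next hev =>
        have hγpos : 0 < γ (Sum.inl i) := by rw [hev]; exact hv
        rw [hγl] at hγpos
        have hr := hrooml i (by linarith)
        have hrm : η ≤ room (Sum.inl i) := by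
          apply hroomle
          rw [hroomdef]
          simp only [Sum.elim_inl]
          linarith
        rw [hroomdef] at hrm
        simp only [Sum.elim_inl] at hrm
        linarith
      · have := (hle0 i).1; linarith
    have hfu : ∀ i, u i ≤ us i + d (Sum.inr i) := by
      intro i
      rw [hddef]
      dsimp only
      split
      · next hev =>
        have hγpos : 0 < γ (Sum.inr i) := by rw [hev]; exact hv
        rw [hγu] at hγpos
        have hr := hroomu i (by linarith)
        have hrm : η ≤ room (Sum.inr i) := by
          apply hroomle
          rw [hroomdef]
          simp only [Sum.elim_inr]
          linarith
        rw [hroomdef] at hrm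
        simp only [Sum.elim_inr] at hrm
        linarith
      · have := (hle0 i).2; linarith
    have h1 := hcompare d hfl hfu
    have hsumd : ∑ e, d e = -(((G v).card : ℝ) * η) := by
      rw [hddef, hGdef]
      dsimp only
      rw [← Finset.sum_filter, Finset.sum_const, nsmul_eq_mul]
      ring
    have hWdP : ∀ k ∈ Θ, (if pred v k then (theta X k : ℝ) * (-η) else 0)
        ≤ (theta X k : ℝ) *
          (pweight (fun i => ls i - d (Sum.inl i)) (fun i => us i + d (Sum.inr i)) (centroid k)
            - pweight ls us (centroid k)) := by
      intro k hkΘ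
      by_cases hp : pred v k
      · rw [if_pos hp]
        have hlb := pweight_ge_of_slk ls us (fun i => ls i - d (Sum.inl i))
          (fun i => us i + d (Sum.inr i)) k η (le_of_lt hηpos)
          (fun e => by rw [hslkd]; have := hdη e; linarith)
        have := mul_le_mul_of_nonneg_left (by linarith : (-η : ℝ) ≤
          pweight (fun i => ls i - d (Sum.inl i)) (fun i => us i + d (Sum.inr i)) (centroid k)
            - pweight ls us (centroid k)) (hθ0 k)
        linarith
      · rw [if_neg hp]
        have hge : pweight ls us (centroid k)
            ≤ pweight (fun i => ls i - d (Sum.inl i)) (fun i => us i + d (Sum.inr i)) (centroid k) := by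
          apply le_pweight
          · exact pweight_le_half ls us k
          · intro e
            rw [hslkd]
            by_cases hev : γ e = v
            · have hne : slk ls us k e ≠ pweight ls us (centroid k) := by
                intro heq
                rcases lt_or_eq_of_le (pweight_le_half ls us k) with hW | hW
                · exact hp ⟨hW, e, hev, heq⟩
                · obtain ⟨z, hz⟩ := hgrid k e
                  have q := hsl' k e
                  have hγe : γ e = go * z := by
                    rw [heq, hW] at q
                    linarith [hz, q]
                  have hγepos : 0 < γ e := by rw [hev]; exact hv
                  rcases le_or_gt z 0 with hz0 | hz0
                  · have hzr : (z:ℝ) ≤ 0 := by exact_mod_cast hz0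
                    nlinarith
                  · have hzr : (1:ℝ) ≤ (z:ℝ) := by exact_mod_cast hz0
                    have : go ≤ γ e := by rw [hγe]; nlinarith
                    linarith [(hγr e).2]
              have hlt : pweight ls us (centroid k) < slk ls us k e :=
                lt_of_le_of_ne (pweight_le_slk ls us k e) (Ne.symm hne)
              have hde : d e = -η := by rw [hddef]; dsimp only; exact if_pos hev
              have := hgap k hkΘ e hlt
              linarith
            · have hde : d e = 0 := by rw [hddef]; dsimp only; exact if_neg hev
              have := pweight_le_slk ls us k e
              linarith
        have := mul_le_mul_of_nonneg_left (by linarith : (0:ℝ) ≤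
          pweight (fun i => ls i - d (Sum.inl i)) (fun i => us i + d (Sum.inr i)) (centroid k)
            - pweight ls us (centroid k)) (hθ0 k)
        linarith
    have hsum1 : ∑ k ∈ P v, ((theta X k : ℝ) * (-η))
        ≤ ∑ k ∈ Θ, (theta X k : ℝ) *
            (pweight (fun i => ls i - d (Sum.inl i)) (fun i => us i + d (Sum.inr i)) (centroid k)
              - pweight ls us (centroid k)) := by
      rw [hPdef]
      dsimp only
      rw [Finset.sum_filter]
      exact Finset.sum_le_sum hWdP
    rw [hsumd] at h1
    have h2 : α * ∑ k ∈ P v, ((theta X k : ℝ) * (-η)) ≤ (1 - α) * (-(((G v).card : ℝ) * η)) :=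
      le_trans (mul_le_mul_of_nonneg_left hsum1 hα0) h1
    rw [← Finset.sum_mul] at h2
    have hfin : ((1 - α) * ((G v).card : ℝ)) * η ≤ (α * ∑ k ∈ P v, (theta X k : ℝ)) * η := by
      nlinarith [h2]
    exact le_of_mul_le_mul_right hfin hηpos
  -- pointwise aggregation bound
  set vals : Finset ℝ := (univ : Finset (Fin n ⊕ Fin n)).image γ with hvalsdef
  have hptw : ∀ k ∈ Θ, pweight ls us (centroid k) - pweight ls' us' (centroid k)
      ≤ ∑ v ∈ vals, (if k ∈ P v then -v else 0) := by
    intro k hk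
    by_cases hPm : ∃ v ∈ vals, k ∈ P v
    · obtain ⟨v₀, hv₀, hkP⟩ := hPm
      have huniq : ∀ v, k ∈ P v → v = v₀ := by
        intro v hkv
        obtain ⟨_, _, e, hev, hes⟩ := (hPmemiff v k).1 hkv
        obtain ⟨_, _, e0, he0v, he0s⟩ := (hPmemiff v₀ k).1 hkP
        rw [← hev, ← he0v]
        exact hγeq k e e0 (by rw [hes, he0s])
      have hsum : ∑ v ∈ vals, (if k ∈ P v then -v else 0) = -v₀ := by
        rw [Finset.sum_eq_single v₀]
        · rw [if_pos hkP]
        · intro b _ hbne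
          rw [if_neg (fun hkb => hbne (huniq b hkb))]
        · intro hnot
          exact absurd hv₀ hnot
      rw [hsum]
      obtain ⟨_, hWlt, e, hev, hes⟩ := (hPmemiff v₀ k).1 hkP
      rcases lt_trichotomy v₀ 0 with hv | hv | hv
      · rcases le_or_gt (pweight ls us (centroid k) - pweight ls' us' (centroid k)) 0 with hD | hD
        · linarith
        · obtain ⟨e', hγe', hes', _, hDe'⟩ := F1 k hD
          have hveq : γ e' = v₀ := by
            rw [← hev]
            exact hγeq k e' e (by rw [hes', hes])
          rw [hDe', hveq]
      · rcases le_or_gt (pweight ls us (centroid k) - pweight ls' us' (centroid k)) 0 with hD | hD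
        · linarith
        · obtain ⟨e', hγe', hes', _, _⟩ := F1 k hD
          have hveq : γ e' = v₀ := by
            rw [← hev]
            exact hγeq k e' e (by rw [hes', hes])
          rw [hveq] at hγe'
          linarith
      · have hF2 := F2 k e (by rw [hev]; exact hv) hes hWlt
        rw [hF2, hev]
    · push_neg at hPm
      have hsum : ∑ v ∈ vals, (if k ∈ P v then -v else 0) = 0 :=
        Finset.sum_eq_zero (fun v hv => if_neg (hPm v hv))
      rw [hsum]
      by_contra hcon
      push_neg at hcon
      obtain ⟨e', hγe', hes', hWlt, _⟩ := F1 k (by linarith)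
      have hkP : k ∈ P (γ e') := (hPmemiff (γ e') k).2 ⟨hk, hWlt, e', rfl, hes'⟩
      exact hPm (γ e') (by rw [hvalsdef]; exact Finset.mem_image.2 ⟨e', mem_univ e', rfl⟩) hkP
  -- main inequality
  have hmain : α * ∑ k ∈ Θ, (theta X k : ℝ) *
      (pweight ls us (centroid k) - pweight ls' us' (centroid k))
      ≤ (1 - α) * (- ∑ e, γ e) := by
    have h1 : ∑ k ∈ Θ, (theta X k : ℝ) *
          (pweight ls us (centroid k) - pweight ls' us' (centroid k))
        ≤ ∑ k ∈ Θ, (theta X k : ℝ) * (∑ v ∈ vals, (if k ∈ P v then -v else 0)) :=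
      Finset.sum_le_sum (fun k hk => mul_le_mul_of_nonneg_left (hptw k hk) (hθ0 k))
    have h2 : ∑ k ∈ Θ, (theta X k : ℝ) * (∑ v ∈ vals, (if k ∈ P v then -v else 0))
        = ∑ v ∈ vals, (-v) * ∑ k ∈ P v, (theta X k : ℝ) := by
      simp_rw [Finset.mul_sum]
      rw [Finset.sum_comm]
      apply Finset.sum_congr rfl
      intro v _
      rw [hPdef]
      dsimp only
      rw [Finset.sum_filter]
      apply Finset.sum_congr rfl
      intro k hk
      by_cases hp : pred v k
      · rw [if_pos ((hPmemiff v k).2 ⟨hk, hp⟩), if_pos hp]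
        ring
      · rw [if_neg (fun hmem => hp ((hPmemiff v k).1 hmem).2), if_neg hp]
        ring
    have h3 : ∀ v ∈ vals, α * ((-v) * ∑ k ∈ P v, (theta X k : ℝ))
        ≤ (1 - α) * ((-v) * ((G v).card : ℝ)) := by
      intro v _
      rcases lt_trichotomy v 0 with hv | hv | hv
      · have hx := mul_le_mul_of_nonneg_left (key1 v) (by linarith : (0:ℝ) ≤ -v)
        nlinarith [hx]
      · rw [hv]
        norm_num
      · have hx := mul_le_mul_of_nonneg_left (key2 v hv) (by linarith : (0:ℝ) ≤ v)
        nlinarith [hx]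
    have h4 : ∑ v ∈ vals, (1 - α) * ((-v) * ((G v).card : ℝ)) = (1 - α) * (- ∑ e, γ e) := by
      rw [← Finset.mul_sum]
      congr 1
      have h5 : ∑ v ∈ vals, v * ((G v).card : ℝ) = ∑ e, γ e := by
        rw [hvalsdef]
        apply Finset.sum_image'
        intro e _
        rw [hGdef]
        dsimp only
        have hcongr : ∀ e' ∈ (univ : Finset (Fin n ⊕ Fin n)).filter (fun e' => γ e' = γ e),
            γ e' = γ e := fun e' he' => (Finset.mem_filter.1 he').2
        rw [Finset.sum_congr rfl hcongr, Finset.sum_const, nsmul_eq_mul]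
        ring
      rw [← h5, ← Finset.sum_neg_distrib]
      apply Finset.sum_congr rfl
      intro v _
      ring
    calc α * ∑ k ∈ Θ, (theta X k : ℝ) *
          (pweight ls us (centroid k) - pweight ls' us' (centroid k))
        ≤ α * ∑ v ∈ vals, (-v) * ∑ k ∈ P v, (theta X k : ℝ) := by
          rw [← h2]; exact mul_le_mul_of_nonneg_left h1 hα0
      _ = ∑ v ∈ vals, α * ((-v) * ∑ k ∈ P v, (theta X k : ℝ)) := Finset.mul_sum _ _ _
      _ ≤ ∑ v ∈ vals, (1 - α) * ((-v) * ((G v).card : ℝ)) := Finset.sum_le_sum h3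
      _ = (1 - α) * (- ∑ e, γ e) := h4
  -- conclude
  have hwidth' : width ls' us' = width ls us + ∑ e, γ e := by
    unfold width
    rw [Fintype.sum_sum_type, ← Finset.sum_add_distrib, ← Finset.sum_add_distrib]
    apply Finset.sum_congr rfl
    intro i _
    rw [hγu, hγl]
    ring
  unfold pcost
  rw [hwidth', ← hΘdef]
  have hsplit : ∑ k ∈ Θ, (theta X k : ℝ) *
        (pweight ls us (centroid k) - pweight ls' us' (centroid k))
      = (∑ k ∈ Θ, (theta X k : ℝ) * pweight ls us (centroid k))
        - ∑ k ∈ Θ, (theta X k : ℝ) * pweight ls' us' (centroid k) := by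
    rw [← Finset.sum_sub_distrib]
    apply Finset.sum_congr rfl
    intro k _
    ring
  rw [hsplit] at hmain
  nlinarith [hmain]






end BoxFiltration


open BoxFiltration

/-- for an input box `V` with integer endpoints and an integer `π ≥ 1`,
if `V*` is a pixel-optimal solution in `s̄ol_α(V, B(V, π))`, then all three rounded
boxes `Ψ₁(V*)`, `Ψ₂(V*)`, `Ψ₃(V*)` are also pixel-optimal solutions. -/
theorem rounded_boxes_pixel_optimal
    (n : ℕ) (hn : 1 ≤ n) (X : Finset (Fin n → ℝ))
    (l u : Fin n → ℝ) (hV : IsBox l u)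
    (hintl : ∀ i, ∃ z : ℤ, l i = (z : ℝ)) (hintu : ∀ i, ∃ z : ℤ, u i = (z : ℝ))
    (π : ℕ) (hπ : 1 ≤ π) (α : ℝ) (hα0 : 0 ≤ α) (hα1 : α ≤ 1)
    (ls us : Fin n → ℝ)
    (hopt : POptSol α l u X (nbhd l u (π : ℝ)) ls us) :
    ∀ r ∈ ({1, 2, 3} : Set ℕ),
      POptSol α l u X (nbhd l u (π : ℝ))
        (fun i => psil r (ls i)) (fun i => psiu r (us i)) := by
  haveI : NeZero n := ⟨by omega⟩
  intro r hr
  have hlsl : ∀ i, ls i ≤ l i := fun i => (hopt.2.1 i).1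
  have husu : ∀ i, u i ≤ us i := fun i => (hopt.2.1 i).2
  simp only [Set.mem_insert_iff, Set.mem_singleton_iff] at hr
  rcases hr with rfl | rfl | rfl
  · -- r = 1 : integer rounding
    refine master X (nbhd l u (π:ℝ)) l u hV α hα0 hα1 ls us hopt 1 (-1)
      (by norm_num) ⟨1, by norm_num⟩ (by norm_num) (by norm_num) (by norm_num)
      _ _ ?_ ?_ ?_ ?_ ?_ ?_ ?_ ?_
    · intro i
      obtain ⟨z, hz⟩ := hintl i
      have h1 : ls i ≤ (z:ℝ) := hz ▸ hlsl i
      have h2 : (⌈ls i⌉ : ℤ) ≤ z := Int.ceil_le.2 h1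
      show psil 1 (ls i) ≤ l i
      simp only [psil, hz]
      exact_mod_cast h2
    · intro i
      obtain ⟨z, hz⟩ := hintu i
      have h1 : (z:ℝ) ≤ us i := hz ▸ husu i
      have h2 : z ≤ ⌊us i⌋ := Int.le_floor.2 h1
      show u i ≤ psiu 1 (us i)
      simp only [psiu, hz]
      exact_mod_cast h2
    · intro i
      exact ⟨⌈ls i⌉, by simp only [psil]; norm_num⟩
    · intro i
      exact ⟨⌊us i⌋, by simp only [psiu]; norm_num⟩
    · intro i
      constructor
      · show (-1:ℝ) < ls i - psil 1 (ls i)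
        simp only [psil]
        linarith [Int.ceil_lt_add_one (ls i)]
      · show ls i - psil 1 (ls i) ≤ -1 + 1
        simp only [psil]
        linarith [Int.le_ceil (ls i)]
    · intro i
      constructor
      · show (-1:ℝ) < psiu 1 (us i) - us i
        simp only [psiu]
        linarith [Int.sub_one_lt_floor (us i)]
      · show psiu 1 (us i) - us i ≤ -1 + 1
        simp only [psiu]
        linarith [Int.floor_le (us i)]
    · intro i h
      exfalso
      simp only [psil] at h
      linarith [Int.le_ceil (ls i)]
    · intro i h
      exfalso
      simp only [psiu] at h
      linarith [Int.floor_le (us i)]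
  · -- r = 2 : half-integer rounding
    refine master X (nbhd l u (π:ℝ)) l u hV α hα0 hα1 ls us hopt (1/2) (-(1/2))
      (by norm_num) ⟨2, by norm_num⟩ (by norm_num) (by norm_num) (by norm_num)
      _ _ ?_ ?_ ?_ ?_ ?_ ?_ ?_ ?_
    · intro i
      obtain ⟨z, hz⟩ := hintl i
      have h1 : ls i ≤ (z:ℝ) := hz ▸ hlsl i
      show psil 2 (ls i) ≤ l i
      simp only [psil, hz]
      split_ifs with ha hb
      · exact_mod_cast Int.ceil_le.2 h1
      · have hfr := Int.self_sub_floor (ls i)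
        have hflt : (⌊ls i⌋:ℝ) < z := by linarith
        have : ⌊ls i⌋ + 1 ≤ z := by exact_mod_cast hflt
        have : (⌊ls i⌋:ℝ) + 1 ≤ z := by exact_mod_cast this
        linarith
      · exact h1
    · intro i
      obtain ⟨z, hz⟩ := hintu i
      have h1 : (z:ℝ) ≤ us i := hz ▸ husu i
      have h2 : z ≤ ⌊us i⌋ := Int.le_floor.2 h1
      have h2' : (z:ℝ) ≤ (⌊us i⌋:ℝ) := by exact_mod_cast h2
      show u i ≤ psiu 2 (us i)
      simp only [psiu, hz]
      split_ifs
      · linarith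
      · linarith
    · intro i
      show ∃ zz : ℤ, psil 2 (ls i) = (1/2 : ℝ) * zz
      simp only [psil]
      split_ifs with ha hb
      · exact ⟨2 * ⌈ls i⌉, by push_cast; ring⟩
      · exact ⟨2 * ⌊ls i⌋ + 1, by push_cast; ring⟩
      · push_neg at hb
        have h0 := Int.fract_nonneg (ls i)
        have hfr := Int.self_sub_floor (ls i)
        exact ⟨2 * ⌊ls i⌋, by push_cast; nlinarith [le_antisymm hb h0]⟩
    · intro i
      show ∃ zz : ℤ, psiu 2 (us i) = (1/2 : ℝ) * zz
      simp only [psiu]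
      split_ifs
      · exact ⟨2 * ⌊us i⌋ + 1, by push_cast; ring⟩
      · exact ⟨2 * ⌊us i⌋, by push_cast; ring⟩
    · intro i
      have hfr := Int.self_sub_floor (ls i)
      have hlt1 := Int.fract_lt_one (ls i)
      have h0 := Int.fract_nonneg (ls i)
      have hc := Int.ceil_le_floor_add_one (ls i)
      have hc' : (⌈ls i⌉:ℝ) ≤ (⌊ls i⌋:ℝ) + 1 := by exact_mod_cast hc
      constructor
      · show (-(1/2):ℝ) < ls i - psil 2 (ls i)
        simp only [psil]
        split_ifs with ha hb
        · linarith
        · linarith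
        · linarith
      · show ls i - psil 2 (ls i) ≤ -(1/2) + 1/2
        simp only [psil]
        split_ifs with ha hb
        · linarith [Int.le_ceil (ls i)]
        · push_neg at ha
          linarith
        · linarith
    · intro i
      have hfr := Int.self_sub_floor (us i)
      have hlt1 := Int.fract_lt_one (us i)
      have h0 := Int.fract_nonneg (us i)
      constructor
      · show (-(1/2):ℝ) < psiu 2 (us i) - us i
        simp only [psiu]
        split_ifs with ha
        · linarith
        · push_neg at ha
          linarith
      · show psiu 2 (us i) - us i ≤ -(1/2) + 1/2
        simp only [psiu]
        split_ifs with ha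
        · linarith
        · linarith
    · intro i h
      exfalso
      have hfr := Int.self_sub_floor (ls i)
      simp only [psil] at h
      split_ifs at h with ha hb
      · linarith [Int.le_ceil (ls i)]
      · push_neg at ha
        linarith
      · linarith
    · intro i h
      exfalso
      have hfr := Int.self_sub_floor (us i)
      have hlt1 := Int.fract_lt_one (us i)
      have h0 := Int.fract_nonneg (us i)
      simp only [psiu] at h
      split_ifs at h with ha
      · linarith
      · linarith
  · -- r = 3 : nearest-integer rounding
    have hpsil3 : ∀ t : ℝ, psil 3 t = if 1/2 < Int.fract t then (⌈t⌉:ℝ) else (⌊t⌋:ℝ) :=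
      fun t => rfl
    have hpsiu3 : ∀ t : ℝ, psiu 3 t = if 1/2 ≤ Int.fract t then (⌈t⌉:ℝ) else (⌊t⌋:ℝ) :=
      fun t => rfl
    refine master X (nbhd l u (π:ℝ)) l u hV α hα0 hα1 ls us hopt 1 (-(1/2))
      (by norm_num) ⟨1, by norm_num⟩ (by norm_num) (by norm_num) (by norm_num)
      _ _ ?_ ?_ ?_ ?_ ?_ ?_ ?_ ?_
    · intro i
      obtain ⟨z, hz⟩ := hintl i
      have h1 : ls i ≤ (z:ℝ) := hz ▸ hlsl i
      have h2 : (⌈ls i⌉:ℝ) ≤ z := by exact_mod_cast Int.ceil_le.2 h1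
      show psil 3 (ls i) ≤ l i
      rw [hpsil3, hz]
      split_ifs
      · exact h2
      · linarith [Int.floor_le (ls i)]
    · intro i
      obtain ⟨z, hz⟩ := hintu i
      have h1 : (z:ℝ) ≤ us i := hz ▸ husu i
      have h2 : (z:ℝ) ≤ (⌊us i⌋:ℝ) := by exact_mod_cast Int.le_floor.2 h1
      show u i ≤ psiu 3 (us i)
      rw [hpsiu3, hz]
      split_ifs
      · linarith [Int.le_ceil (us i)]
      · exact h2
    · intro i
      rw [hpsil3]
      split_ifs
      · exact ⟨⌈ls i⌉, by norm_num⟩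
      · exact ⟨⌊ls i⌋, by norm_num⟩
    · intro i
      rw [hpsiu3]
      split_ifs
      · exact ⟨⌈us i⌉, by norm_num⟩
      · exact ⟨⌊us i⌋, by norm_num⟩
    · intro i
      have hfr := Int.self_sub_floor (ls i)
      have hlt1 := Int.fract_lt_one (ls i)
      have h0 := Int.fract_nonneg (ls i)
      have hc : (⌈ls i⌉:ℝ) ≤ (⌊ls i⌋:ℝ) + 1 := by exact_mod_cast Int.ceil_le_floor_add_one (ls i)
      rw [hpsil3]
      split_ifs with ha
      · constructor
        · linarith
        · linarith [Int.le_ceil (ls i)]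
      · push_neg at ha
        constructor
        · linarith
        · linarith
    · intro i
      have hfr := Int.self_sub_floor (us i)
      have hlt1 := Int.fract_lt_one (us i)
      have h0 := Int.fract_nonneg (us i)
      have hc : (⌈us i⌉:ℝ) ≤ (⌊us i⌋:ℝ) + 1 := by exact_mod_cast Int.ceil_le_floor_add_one (us i)
      rw [hpsiu3]
      split_ifs with ha
      · constructor
        · linarith [Int.le_ceil (us i)]
        · linarith
      · push_neg at ha
        constructor
        · linarith
        · linarith
    · intro i h
      rw [hpsil3] at h
      obtain ⟨z, hz⟩ := hintl i
      have h1 : ls i ≤ (z:ℝ) := hz ▸ hlsl i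
      split_ifs at h with ha
      · exfalso
        linarith [Int.le_ceil (ls i)]
      · rw [hz]
        apply lt_of_le_of_ne h1
        intro heq
        rw [heq] at h
        simp at h
    · intro i h
      rw [hpsiu3] at h
      obtain ⟨z, hz⟩ := hintu i
      have h1 : (z:ℝ) ≤ us i := hz ▸ husu i
      split_ifs at h with ha
      · rw [hz]
        apply lt_of_le_of_ne h1
        intro heq
        rw [← heq] at h
        simp at h
      · exfalso
        linarith [Int.floor_le (us i)]
end
end
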